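/- arXiv:1802.01705 — 3 statements merged into one kernel-verified Lean document; each statement's English description precedes it below -/
import Mathlib

section
/- Let λ = (λ₁, λ₂, …, λₙ) be a partition. Then the Schur function satisfies s_λ = B_{λ₁} B_{λ₂} ⋯ B_{λₙ} · 1, where B_k := Σ_{r≥0} (−1)^r h_{k+r} ∘ e_r^⊥ is the k-th Bernstein operator. -/
/-!
STATEMENT 0.  The ring `Λ_ℚ = ℚ[x₁,x₂,…]` of symmetric functions
(`x_i = p_i/i` the normalized power sums) is axiomatised as a structure
`SymF` on a commutative ℚ-algebra `A`:  homogeneous and elementary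
symmetric functions `h_k`, `e_k` are defined by their generating series
(encoded by the equivalent recurrences obtained by comparing coefficients
of `d/dz log`), `Dx k = ∂_{x_k}`, and `perp f = f^⊥` is the adjoint map
`x_k ↦ (1/k) ∂_{x_k}`.  The Schur function is given by the Jacobi–Trudi
determinant, and the Bernstein operator is
`B_k = ∑_{r≥0} (−1)^r h_{k+r} ∘ e_r^⊥` (the sum being locally finite,
it is rendered as a sum up to the truncation bound `bnd f`).
-/

open scoped BigOperators Classical

noncomputable section

/-- The ring of symmetric functions `ℚ[x₁,x₂,…]` in the normalized power
sums `x_k = p_k/k`, `k ≥ 1` (we set `x 0 = 0`). -/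
structure SymF (A : Type*) [CommRing A] [Algebra ℚ A] where
  x : ℕ → A
  x0 : x 0 = 0
  /-- `A` is free with basis the monomials in the `x_k`, `k ≥ 1` -/
  bas : Module.Basis (ℕ →₀ ℕ) ℚ A
  bas_eq : ∀ d : ℕ →₀ ℕ, bas d = d.prod fun k n => x (k+1) ^ n
  /-- `h_k`, defined by `∑ z^k h_k = exp (∑_{k>0} z^k x_k)` -/
  h : ℕ → A
  /-- `e_k`, defined by `∑ z^k e_k = exp (−∑_{k>0} (−z)^k x_k)` -/
  e : ℕ → A
  h_zero : h 0 = 1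
  h_rec : ∀ n : ℕ, ((n : ℚ) + 1) • h (n+1) =
    ∑ k ∈ Finset.range (n+1), ((k : ℚ) + 1) • (x (k+1) * h (n - k))
  e_zero : e 0 = 1
  e_rec : ∀ n : ℕ, ((n : ℚ) + 1) • e (n+1) =
    ∑ k ∈ Finset.range (n+1), (((-1 : ℚ))^k * ((k : ℚ) + 1)) • (x (k+1) * e (n - k))
  /-- the derivative `∂_{x_k}` -/
  Dx : ℕ → Module.End ℚ A
  Dx_leibniz : ∀ k a b, Dx k (a * b) = Dx k a * b + a * Dx k b
  Dx_x : ∀ k j, 1 ≤ k → Dx k (x j) = if j = k then 1 else 0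
  /-- the adjoint map `f ↦ f^⊥ = f(∂_{x₁}, ½∂_{x₂}, …)` with respect to the
  scalar product `⟨x_λ, x_μ⟩ = δ_{λμ} |Aut(λ)|/∏ᵢλᵢ` -/
  perp : A →ₗ[ℚ] Module.End ℚ A
  perp_one : perp 1 = 1
  perp_mul : ∀ a b, perp (a * b) = perp a * perp b
  perp_x : ∀ k, 1 ≤ k → perp (x k) = ((k : ℚ))⁻¹ • Dx k
  /-- truncation bound: `e_k^⊥ f = 0` for `k ≥ bnd f` -/
  bnd : A → ℕ
  bnd_eperp : ∀ f k, bnd f ≤ k → perp (e k) f = 0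

namespace SymF

variable {A : Type*} [CommRing A] [Algebra ℚ A] (S : SymF A)

/-- `h_n` for `n ∈ ℤ`, with `h_n = 0` for `n < 0` -/
def hZ (n : ℤ) : A := if 0 ≤ n then S.h n.toNat else 0

/-- `e_r^⊥` -/
def ePerp (r : ℕ) : A → A := fun f => S.perp (S.e r) f

/-- the `k`-th Bernstein operator `B_k = ∑_{r≥0} (−1)^r h_{k+r} ∘ e_r^⊥` -/
def B (k : ℤ) (f : A) : A :=
  ∑ r ∈ Finset.range (S.bnd f), ((-1 : ℚ))^r • (S.hZ (k + (r : ℤ)) * S.ePerp r f)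

/-- the Schur function `s_λ`, via the Jacobi–Trudi determinant
`s_λ = det (h_{λᵢ − i + j})` -/
def schur (l : List ℕ) : A :=
  Matrix.det (Matrix.of fun i j : Fin l.length => S.hZ ((l.get i : ℤ) - (i : ℕ) + (j : ℕ)))

end SymF

/-!
Write `J(b) = det (h_{bᵢ + j})` for integer row data `b = (b₁, …, bₙ)`, so that
`s_λ = J(λ₁, λ₂ - 1, λ₃ - 2, …)`. The heart of the argument is `B_k J(b) = J(k, b₁ - 1, …, bₙ - 1)`,
proved by induction on `n` through Laplace expansion along the first column. It rests on the
commutation rule `B_k h_t = h_t B_k − h_{t−1} B_{k+1}`, which comes from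
`e_r^⊥ (h_t f) = h_t e_r^⊥ f + h_{t−1} e_{r−1}^⊥ f`: the family `e_r^⊥` satisfies
`e_n^⊥ (a b) = ∑ e_i^⊥ a · e_{n−i}^⊥ b`, and `e_r^⊥ h_t = 0` for `r ≥ 2`. In the inductive step the
terms carrying `h_{bᵢ}` recombine to `h_k J(b)`, being the Laplace expansion of a determinant
with two equal columns.
-/

open Finset

/-- Coefficientwise Leibniz rule `(UV)' = U'V + UV'` for the power series `U = ∑ uᵢ zⁱ`,
`V = ∑ vⱼ zʲ`. -/
lemma add_one_smul_sum_range_mul {R : Type*} [Semiring R] [Algebra ℚ R] (u v : ℕ → R) (n : ℕ) :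
    ((n : ℚ) + 1) • ∑ i ∈ range (n + 2), u i * v (n + 1 - i) =
      ∑ i ∈ range (n + 1), (((i : ℚ) + 1) • u (i + 1)) * v (n - i) +
        ∑ i ∈ range (n + 1), u i * ((((n - i : ℕ) : ℚ) + 1) • v (n - i + 1)) := by
  have hsplit : ∀ i ∈ range (n + 2), ((n : ℚ) + 1) • (u i * v (n + 1 - i)) =
      (i : ℚ) • (u i * v (n + 1 - i)) + ((n + 1 - i : ℕ) : ℚ) • (u i * v (n + 1 - i)) := by
    intro i hi
    rw [← add_smul, Nat.cast_sub (by have := mem_range.mp hi; omega)]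
    push_cast
    ring_nf
  rw [smul_sum, sum_congr rfl hsplit, sum_add_distrib,
    sum_range_succ' (fun i => (i : ℚ) • (u i * v (n + 1 - i))),
    sum_range_succ (fun i => ((n + 1 - i : ℕ) : ℚ) • (u i * v (n + 1 - i)))]
  simp only [Nat.cast_zero, zero_smul, add_zero, Nat.sub_self, Nat.cast_add, Nat.cast_one,
    smul_mul_assoc, mul_smul_comm]
  congr 1 <;> refine sum_congr rfl fun i hi => ?_ <;> have := mem_range.mp hi
  · rw [show n + 1 - (i + 1) = n - i by omega]
  · rw [show n + 1 - i = n - i + 1 by omega, Nat.cast_succ]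

lemma neg_one_pow_mul_eq_smul {R : Type*} [Ring R] [Algebra ℚ R] (m : ℕ) (a : R) :
    (-1 : R) ^ m * a = (-1 : ℚ) ^ m • a := by
  rw [Algebra.smul_def, map_pow, map_neg, map_one]

namespace SymF

variable {A : Type*} [CommRing A] [Algebra ℚ A] (S : SymF A)

lemma Dx_one (k : ℕ) : S.Dx k 1 = 0 := by
  simpa using S.Dx_leibniz k 1 1

@[simp]
lemma hZ_natCast (m : ℕ) : S.hZ m = S.h m := by
  simp [hZ]

lemma hZ_of_neg {t : ℤ} (ht : t < 0) : S.hZ t = 0 := by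
  simp [hZ, ht.not_ge]

lemma hZ_zero : S.hZ 0 = 1 := by
  simp [hZ, S.h_zero]

lemma smul_hZ_eq_sum (n : ℤ) (N : ℕ) (hN : n ≤ N) :
    (n : ℚ) • S.hZ n = ∑ j ∈ range N, ((j : ℚ) + 1) • (S.x (j + 1) * S.hZ (n - 1 - j)) := by
  rcases le_or_gt n 0 with hn | hn
  · have hlhs : (n : ℚ) • S.hZ n = 0 := by
      rcases hn.lt_or_eq with hn | rfl
      · rw [S.hZ_of_neg hn, smul_zero]
      · rw [Int.cast_zero, zero_smul]
    refine hlhs.trans (sum_eq_zero fun j _ => ?_).symm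
    rw [S.hZ_of_neg (by omega), mul_zero, smul_zero]
  · obtain ⟨m, rfl⟩ : ∃ m : ℕ, n = m + 1 := ⟨(n - 1).toNat, by omega⟩
    have hvanish : ∀ j ∈ range N, j ∉ range (m + 1) →
        ((j : ℚ) + 1) • (S.x (j + 1) * S.hZ ((m : ℤ) + 1 - 1 - j)) = 0 := by
      intro j _ hj
      rw [mem_range, not_lt] at hj
      rw [S.hZ_of_neg (by omega), mul_zero, smul_zero]
    rw [← sum_subset (range_subset_range.mpr (by omega)) hvanish,
      show (m : ℤ) + 1 = (m + 1 : ℕ) by push_cast; rfl, hZ_natCast, Int.cast_natCast,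
      Nat.cast_succ, S.h_rec m]
    refine sum_congr rfl fun j hj => ?_
    rw [show ((m + 1 : ℕ) : ℤ) - 1 - j = ((m - j : ℕ) : ℤ) by have := mem_range.mp hj; omega,
      hZ_natCast]

lemma Dx_hZ {k : ℕ} (hk : 1 ≤ k) (t : ℤ) : S.Dx k (S.hZ t) = S.hZ (t - k) := by
  rcases lt_or_ge t 0 with ht | ht
  · rw [S.hZ_of_neg ht, map_zero, S.hZ_of_neg (by omega)]
  obtain ⟨m, rfl⟩ := Int.eq_ofNat_of_zero_le ht
  induction m using Nat.strong_induction_on with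
  | _ m ih =>
  rcases Nat.eq_zero_or_pos m with rfl | hm
  · rw [Nat.cast_zero, S.hZ_zero, S.Dx_one, S.hZ_of_neg (by omega)]
  have hderiv : ∀ j ∈ range m, S.Dx k (S.x (j + 1) * S.hZ (m - 1 - j)) =
      (if j + 1 = k then S.hZ (m - 1 - j) else 0) + S.x (j + 1) * S.hZ ((m - k : ℤ) - 1 - j) := by
    intro j hj
    have hj := mem_range.mp hj
    rw [S.Dx_leibniz, S.Dx_x k _ hk, show (m : ℤ) - 1 - j = ((m - 1 - j : ℕ) : ℤ) by omega,
      ih _ (by omega) (by omega), ite_mul, one_mul, zero_mul]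
    congr 3
    omega
  have hdelta : ∑ j ∈ range m, ((j : ℚ) + 1) • (if j + 1 = k then S.hZ (m - 1 - j) else 0) =
      (k : ℚ) • S.hZ (m - k) := by
    by_cases hkm : k ≤ m
    · rw [sum_eq_single_of_mem (k - 1) (mem_range.mpr (by omega)) fun j _ hj => by
        rw [if_neg (by omega), smul_zero]]
      rw [if_pos (by omega), Nat.cast_sub hk, show (m : ℤ) - 1 - (k - 1 : ℕ) = m - k by omega]
      push_cast
      ring_nf
    · rw [S.hZ_of_neg (by omega), smul_zero]
      exact sum_eq_zero fun j hj => by rw [if_neg (by have := mem_range.mp hj; omega), smul_zero]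
  have hm' : (m : ℚ) ≠ 0 := by exact_mod_cast hm.ne'
  refine smul_right_injective A hm' ?_
  calc (m : ℚ) • S.Dx k (S.hZ m)
      = S.Dx k (((m : ℤ) : ℚ) • S.hZ m) := by rw [map_smul, Int.cast_natCast]
    _ = ∑ j ∈ range m, ((j : ℚ) + 1) • S.Dx k (S.x (j + 1) * S.hZ (m - 1 - j)) := by
      rw [S.smul_hZ_eq_sum m m le_rfl, map_sum]
      simp only [map_smul]
    _ = (k : ℚ) • S.hZ (m - k) + (((m - k : ℤ)) : ℚ) • S.hZ (m - k) := by
      rw [sum_congr rfl fun j hj => by rw [hderiv j hj], ← hdelta,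
        S.smul_hZ_eq_sum (m - k) m (by omega), ← sum_add_distrib]
      simp only [smul_add]
    _ = (m : ℚ) • S.hZ (m - k) := by
      rw [← add_smul]
      push_cast
      ring_nf

lemma ePerp_zero (f : A) : S.ePerp 0 f = f := by
  simp [ePerp, S.e_zero, S.perp_one]

lemma smul_ePerp_succ (n : ℕ) (f : A) :
    ((n : ℚ) + 1) • S.ePerp (n + 1) f =
      ∑ k ∈ range (n + 1), (-1 : ℚ) ^ k • S.Dx (k + 1) (S.ePerp (n - k) f) := by
  have h := congrArg (fun g => S.perp g f) (S.e_rec n)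
  simp only [map_smul, map_sum, LinearMap.smul_apply, LinearMap.sum_apply] at h
  rw [ePerp, h]
  refine sum_congr rfl fun k _ => ?_
  rw [S.perp_mul, S.perp_x (k + 1) (by omega), smul_mul_assoc, LinearMap.smul_apply,
    Module.End.mul_apply, smul_smul, Nat.cast_succ, mul_assoc,
    mul_inv_cancel₀ (by positivity), mul_one, ePerp]

lemma ePerp_one (f : A) : S.ePerp 1 f = S.Dx 1 f := by
  simpa [S.ePerp_zero] using S.smul_ePerp_succ 0 f

lemma ePerp_add_two_hZ (r : ℕ) (t : ℤ) : S.ePerp (r + 2) (S.hZ t) = 0 := by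
  induction r using Nat.strong_induction_on with
  | _ r ih =>
  refine smul_right_injective A (by positivity : ((r + 1 : ℕ) : ℚ) + 1 ≠ 0) ?_
  have hlow : ∀ k ∈ range r, (-1 : ℚ) ^ k • S.Dx (k + 1) (S.ePerp (r + 1 - k) (S.hZ t)) = 0 := by
    intro k hk
    have hk := mem_range.mp hk
    rw [show r + 1 - k = (r - 1 - k) + 2 by omega,
      ih _ (by omega), map_zero, smul_zero]
  beta_reduce
  rw [smul_ePerp_succ, smul_zero, sum_range_succ, sum_range_succ, sum_eq_zero hlow,
    show r + 1 - r = 1 by omega, Nat.sub_self, S.ePerp_one, S.ePerp_zero,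
    S.Dx_hZ le_rfl, S.Dx_hZ (by omega), S.Dx_hZ (by omega), pow_succ, mul_neg_one, neg_smul,
    zero_add]
  push_cast
  rw [show t - 1 - (r + 1) = t - (r + 1 + 1) by ring, add_neg_cancel]

/-- `Δ eₙ = ∑ eᵢ ⊗ eₙ₋ᵢ`: both sides satisfy the recurrence `smul_ePerp_succ`, by the Leibniz
rule for the `∂_{x_k}` and for products of power series. -/
lemma ePerp_mul (n : ℕ) (a b : A) :
    S.ePerp n (a * b) = ∑ i ∈ range (n + 1), S.ePerp i a * S.ePerp (n - i) b := by
  induction n using Nat.strong_induction_on with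
  | _ n ih =>
  cases n with
  | zero => simp [ePerp_zero]
  | succ n =>
  refine smul_right_injective A (by positivity : (n : ℚ) + 1 ≠ 0) ?_
  have hexpand : ∀ k ∈ range (n + 1), (-1 : ℚ) ^ k • S.Dx (k + 1) (S.ePerp (n - k) (a * b)) =
      ∑ i ∈ range (n + 1 - k),
        (((-1 : ℚ) ^ k • S.Dx (k + 1) (S.ePerp i a)) * S.ePerp (n - k - i) b +
          S.ePerp i a * ((-1 : ℚ) ^ k • S.Dx (k + 1) (S.ePerp (n - k - i) b))) := by
    intro k hk
    rw [ih _ (by omega), map_sum, smul_sum, show n - k + 1 = n + 1 - k by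
      have := mem_range.mp hk; omega]
    refine sum_congr rfl fun i _ => ?_
    rw [S.Dx_leibniz, smul_add, smul_mul_assoc, mul_smul_comm]
  have hleft : ∑ k ∈ range (n + 1), ∑ i ∈ range (n + 1 - k),
      ((-1 : ℚ) ^ k • S.Dx (k + 1) (S.ePerp i a)) * S.ePerp (n - k - i) b =
        ∑ m ∈ range (n + 1), (((m : ℚ) + 1) • S.ePerp (m + 1) a) * S.ePerp (n - m) b := by
    rw [← sum_range_diag_flip (n + 1)]
    refine sum_congr rfl fun m hm => ?_
    rw [smul_ePerp_succ, sum_mul]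
    refine sum_congr rfl fun k hk => ?_
    rw [show n - k - (m - k) = n - m by have := mem_range.mp hm; have := mem_range.mp hk; omega]
  have hright : ∑ k ∈ range (n + 1), ∑ i ∈ range (n + 1 - k),
      S.ePerp i a * ((-1 : ℚ) ^ k • S.Dx (k + 1) (S.ePerp (n - k - i) b)) =
        ∑ i ∈ range (n + 1), S.ePerp i a * ((((n - i : ℕ) : ℚ) + 1) • S.ePerp (n - i + 1) b) := by
    rw [sum_comm' (t' := range (n + 1)) (s' := fun i => range (n + 1 - i)) (by
      intro k i; simp only [mem_range]; omega)]
    refine sum_congr rfl fun i hi => ?_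
    rw [smul_ePerp_succ, mul_sum, show n - i + 1 = n + 1 - i by have := mem_range.mp hi; omega]
    refine sum_congr rfl fun k _ => ?_
    rw [show n - i - k = n - k - i by omega]
  beta_reduce
  rw [smul_ePerp_succ, sum_congr rfl hexpand, show n + 1 + 1 = n + 2 from rfl,
    add_one_smul_sum_range_mul (fun i => S.ePerp i a) (fun j => S.ePerp j b), ← hleft, ← hright,
    ← sum_add_distrib]
  exact sum_congr rfl fun k _ => sum_add_distrib

lemma ePerp_succ_hZ_mul (r : ℕ) (t : ℤ) (f : A) :
    S.ePerp (r + 1) (S.hZ t * f) = S.hZ t * S.ePerp (r + 1) f + S.hZ (t - 1) * S.ePerp r f := by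
  have hvanish : ∀ i ∈ range r, S.ePerp (i + 2) (S.hZ t) * S.ePerp (r + 1 - (i + 2)) f = 0 :=
    fun i _ => by rw [S.ePerp_add_two_hZ, zero_mul]
  rw [S.ePerp_mul, sum_range_succ', sum_range_succ', sum_eq_zero hvanish, zero_add,
    S.ePerp_one, S.Dx_hZ le_rfl, S.ePerp_zero, Nat.cast_one, Nat.add_sub_cancel, Nat.sub_zero,
    add_comm]

lemma ePerp_succ_one (r : ℕ) : S.ePerp (r + 1) 1 = 0 := by
  cases r with
  | zero => rw [S.ePerp_one, S.Dx_one]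
  | succ r => rw [← S.hZ_zero, S.ePerp_add_two_hZ]

lemma B_eq_sum_of_bnd_le (k : ℤ) (f : A) {N : ℕ} (hN : S.bnd f ≤ N) :
    S.B k f = ∑ r ∈ range N, (-1 : ℚ) ^ r • (S.hZ (k + r) * S.ePerp r f) :=
  sum_subset (range_subset_range.mpr hN) fun r _ hr => by
    rw [ePerp, S.bnd_eperp f r (not_lt.mp (mem_range.not.mp hr)), mul_zero, smul_zero]

lemma B_add (k : ℤ) (f g : A) : S.B k (f + g) = S.B k f + S.B k g := by
  set N := S.bnd (f + g) + S.bnd f + S.bnd g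
  rw [S.B_eq_sum_of_bnd_le k (f + g) (N := N) (by omega),
    S.B_eq_sum_of_bnd_le k f (N := N) (by omega), S.B_eq_sum_of_bnd_le k g (N := N) (by omega),
    ← sum_add_distrib]
  simp only [ePerp, map_add, mul_add, smul_add]

lemma B_smul (k : ℤ) (q : ℚ) (f : A) : S.B k (q • f) = q • S.B k f := by
  set N := S.bnd (q • f) + S.bnd f
  rw [S.B_eq_sum_of_bnd_le k (q • f) (N := N) (by omega),
    S.B_eq_sum_of_bnd_le k f (N := N) (by omega), smul_sum]
  simp only [ePerp, map_smul, mul_smul_comm, smul_comm q]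

lemma B_sum {ι : Type*} (k : ℤ) (s : Finset ι) (F : ι → A) :
    S.B k (∑ i ∈ s, F i) = ∑ i ∈ s, S.B k (F i) :=
  map_sum (AddMonoidHom.mk' (S.B k) (S.B_add k)) F s

lemma B_one (k : ℤ) : S.B k 1 = S.hZ k := by
  rw [S.B_eq_sum_of_bnd_le k 1 (N := S.bnd 1 + 1) (by omega), sum_range_succ']
  simp [ePerp_succ_one, ePerp_zero]

lemma B_hZ_mul (k t : ℤ) (f : A) :
    S.B k (S.hZ t * f) = S.hZ t * S.B k f - S.hZ (t - 1) * S.B (k + 1) f := by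
  set N := S.bnd (S.hZ t * f) + S.bnd f
  rw [S.B_eq_sum_of_bnd_le k (S.hZ t * f) (N := N + 1) (by omega),
    S.B_eq_sum_of_bnd_le k f (N := N + 1) (by omega),
    S.B_eq_sum_of_bnd_le (k + 1) f (N := N) (by omega), sum_range_succ', sum_range_succ']
  have hterm : ∀ s ∈ range N,
      (-1 : ℚ) ^ (s + 1) • (S.hZ (k + (s + 1 : ℕ)) * S.ePerp (s + 1) (S.hZ t * f)) =
        S.hZ t * ((-1 : ℚ) ^ (s + 1) • (S.hZ (k + (s + 1 : ℕ)) * S.ePerp (s + 1) f)) -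
          S.hZ (t - 1) * ((-1 : ℚ) ^ s • (S.hZ (k + 1 + s) * S.ePerp s f)) := by
    intro s _
    rw [S.ePerp_succ_hZ_mul, show k + ((s + 1 : ℕ) : ℤ) = k + 1 + s by push_cast; ring]
    simp only [Algebra.smul_def, map_pow, map_neg, map_one]
    ring
  rw [sum_congr rfl hterm, sum_sub_distrib, ← mul_sum, ← mul_sum]
  simp only [pow_zero, one_smul, ePerp_zero, Nat.cast_zero, add_zero]
  ring

/-- `s_λ` is the case `bᵢ = λᵢ - i`, rows and columns counted from `0`. -/
def jacobiTrudi {n : ℕ} (b : Fin n → ℤ) : A :=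
  (Matrix.of fun i j : Fin n => S.hZ (b i + (j : ℕ))).det

lemma jacobiTrudi_zero (b : Fin 0 → ℤ) : S.jacobiTrudi b = 1 :=
  Matrix.det_fin_zero

lemma jacobiTrudi_one (b : Fin 1 → ℤ) : S.jacobiTrudi b = S.hZ (b 0) := by
  simp [jacobiTrudi]

lemma jacobiTrudi_succ {n : ℕ} (b : Fin (n + 1) → ℤ) :
    S.jacobiTrudi b =
      ∑ i : Fin (n + 1), (-1 : ℚ) ^ (i : ℕ) • (S.hZ (b i) * S.jacobiTrudi (i.removeNth b + 1)) := by
  rw [jacobiTrudi, Matrix.det_succ_column_zero]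
  refine sum_congr rfl fun i _ => ?_
  rw [mul_assoc, neg_one_pow_mul_eq_smul]
  simp only [Matrix.of_apply, Fin.val_zero, Nat.cast_zero, add_zero, jacobiTrudi]
  congr 3
  ext i' j'
  simp only [Matrix.submatrix_apply, Matrix.of_apply, Fin.val_succ, Fin.removeNth_apply,
    Pi.add_apply, Pi.one_apply]
  push_cast
  ring_nf

/-- Laplace expansion along the first column of the determinant of `h_{vᵢ + cⱼ}` with
`v = (k, b)` and column shifts `c = (0, 0, 1, …, n)`, which vanishes as its first two columns
agree. -/
lemma sum_hZ_mul_jacobiTrudi_cons {n : ℕ} (k : ℤ) (b : Fin (n + 1) → ℤ) :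
    ∑ i : Fin (n + 1),
        (-1 : ℚ) ^ (i : ℕ) • (S.hZ (b i) * S.jacobiTrudi (Fin.cons k (i.removeNth b))) =
      S.hZ k * S.jacobiTrudi b := by
  set v : Fin (n + 2) → ℤ := Fin.cons k b
  set c : Fin (n + 2) → ℤ := Fin.cons 0 fun j : Fin (n + 1) => (j : ℕ)
  have hzero : (Matrix.of fun i j => S.hZ (v i + c j)).det = 0 :=
    Matrix.det_zero_of_column_eq (i := 0) (j := 1) (by simp) fun _ => rfl
  rw [Matrix.det_succ_column_zero, Fin.sum_univ_succ] at hzero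
  have hminor : ∀ i : Fin (n + 2),
      ((Matrix.of fun i j => S.hZ (v i + c j)).submatrix i.succAbove Fin.succ).det =
        S.jacobiTrudi (i.removeNth v) := fun _ => rfl
  have hterm : ∀ i : Fin (n + 1), (-1 : A) ^ (i.succ : ℕ) * S.hZ (v i.succ + c 0) *
      S.jacobiTrudi (i.succ.removeNth v) =
        -((-1 : ℚ) ^ (i : ℕ) • (S.hZ (b i) * S.jacobiTrudi (Fin.cons k (i.removeNth b)))) := by
    intro i
    rw [Fin.val_succ, pow_succ, mul_neg_one, neg_mul, neg_mul, mul_assoc,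
      neg_one_pow_mul_eq_smul]
    simp only [v, c, Fin.cons_zero, Fin.cons_succ, add_zero]
    rw [← Fin.cons_comp_succ_succAbove]
    rfl
  simp only [hminor, Matrix.of_apply] at hzero
  rw [sum_congr rfl fun i _ => hterm i, sum_neg_distrib, ← sub_eq_add_neg, sub_eq_zero] at hzero
  simpa [v, c] using hzero.symm

lemma jacobiTrudi_cons {n : ℕ} (k : ℤ) (c : Fin (n + 1) → ℤ) :
    S.jacobiTrudi (Fin.cons k c : Fin (n + 2) → ℤ) = S.hZ k * S.jacobiTrudi (c + 1) -
      ∑ i : Fin (n + 1),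
        (-1 : ℚ) ^ (i : ℕ) • (S.hZ (c i) *
          S.jacobiTrudi (Fin.cons (k + 1) (i.removeNth (c + 1)) : Fin (n + 1) → ℤ)) := by
  have hrows : ∀ i : Fin (n + 1),
      i.succ.removeNth (Fin.cons k c : Fin (n + 2) → ℤ) + 1 =
        (Fin.cons (k + 1) (i.removeNth (c + 1)) : Fin (n + 1) → ℤ) := by
    intro i
    ext j
    cases j using Fin.cases <;> simp [Fin.removeNth_apply]
  rw [jacobiTrudi_succ, Fin.sum_univ_succ, sub_eq_add_neg, ← sum_neg_distrib]
  congr 1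
  · simp
  · refine sum_congr rfl fun i _ => ?_
    rw [hrows, Fin.val_succ, pow_succ, mul_neg_one, neg_smul, Fin.cons_succ]

lemma B_jacobiTrudi {n : ℕ} (b : Fin n → ℤ) (k : ℤ) :
    S.B k (S.jacobiTrudi b) = S.jacobiTrudi (Fin.cons k (b - 1)) := by
  induction n generalizing k with
  | zero => rw [S.jacobiTrudi_zero, B_one, jacobiTrudi_one, Fin.cons_zero]
  | succ n ih =>
    rw [S.jacobiTrudi_succ b, B_sum]
    simp only [B_smul, B_hZ_mul, ih, add_sub_cancel_right, smul_sub, sum_sub_distrib,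
      sum_hZ_mul_jacobiTrudi_cons, jacobiTrudi_cons, sub_add_cancel, Pi.sub_apply, Pi.one_apply]

lemma foldr_B_one_eq_jacobiTrudi (l : List ℕ) :
    l.foldr (fun k acc => S.B (k : ℤ) acc) 1 =
      S.jacobiTrudi (fun i : Fin l.length => (l.get i : ℤ) - (i : ℕ)) := by
  induction l with
  | nil => exact (S.jacobiTrudi_zero _).symm
  | cons a l ih =>
    simp only [List.bind_eq_flatMap, List.flatMap_cons, List.pure_def, List.singleton_append,
      List.foldr_cons] at ih ⊢
    rw [ih, B_jacobiTrudi]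
    congr 1
    ext i
    refine Fin.cases ?_ (fun i => ?_) i
    · simp
    · simp only [List.get_eq_getElem, Fin.cons_succ, Pi.sub_apply, Pi.one_apply, Fin.val_succ,
        List.getElem_cons_succ, Nat.cast_add, Nat.cast_one]
      ring

end SymF

theorem schur_eq_bernstein_string_general {A : Type*} [CommRing A] [Algebra ℚ A]
    (S : SymF A) (l : List ℕ) :
    S.schur l = l.foldr (fun k acc => S.B (k : ℤ) acc) 1 :=
  (S.foldr_B_one_eq_jacobiTrudi l).symm

/-- For a partition `λ = (λ₁, λ₂, …, λₙ)`,
`s_λ = B_{λ₁} B_{λ₂} ⋯ B_{λₙ} · 1`. -/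
theorem schur_eq_bernstein_string {A : Type*} [CommRing A] [Algebra ℚ A]
    (S : SymF A) (l : List ℕ) (hl : l.Chain' (· ≥ ·)) (hpos : ∀ p ∈ l, 0 < p) :
    S.schur l = l.foldr (fun k acc => S.B (k : ℤ) acc) 1 :=
  schur_eq_bernstein_string_general S l
end
end

section
/- For every n ∈ ℤ, the following operator identity holds on the ring of symmetric functions in superspace: Σ_{r,s≥0} (−1)^{r+s} θ_{n+r+s+1} ∘ e_r^⊥ ∘ ∂_{ẽ_s} = Σ_{r≥0} (−1)^r θ_{n+r+1} ∘ ∂_{ẽ₀} ∘ e_r^⊥. Consequently, the even type-I Bernstein operator B_n^{(0)} = ∂_{ẽ₀} ∘ B_n^{(1)} admits the explicit expression B_n^{(0)} = Σ_{r≥0} (−1)^r h_{n+r} ∘ e_r^⊥ − Σ_{r,s≥0} (−1)^{r+s} θ_{n+r+s+1} ∘ e_r^⊥ ∘ ∂_{ẽ_s}. -/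
/-!
Common setup: the ring of symmetric functions in superspace
`𝒜 = ℚ[x₁,x₂,…] ⊗ ⋀[θ₁,θ₂,…]`, axiomatised as a structure `SSF` on a
ℚ-algebra `A`, together with superpartitions and the various derived
operators (Bernstein operators in superspace of the four types, etc.).

Conventions:
* `x k`, `θ k` are the (normalized) power sums; they are meaningful for
  `k ≥ 1` and we set `x 0 = θ 0 = 0`.
* All "locally finite" infinite sums of operators `∑_{r ≥ 0}` are rendered
  as finite sums `∑ r ∈ Finset.range (bnd f)` where `bnd f` is a bound
  beyond which all relevant operators annihilate `f`.
-/

open scoped BigOperators Classical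

noncomputable section

/-- A superpartition `Λ = (Λᵃ; Λˢ)`: `Λᵃ` is a strictly decreasing list of
nonnegative integers (the fermionic parts) and `Λˢ` is a weakly decreasing
list of positive integers (the bosonic parts). -/
structure SuperPartition where
  a : List ℕ
  s : List ℕ
  ha : a.Chain' (· > ·)
  hs : s.Chain' (· ≥ ·)
  hs0 : ∀ p ∈ s, 0 < p

namespace SuperPartition

/-- the fermionic degree `m(Λ)` -/
def fdeg (Λ : SuperPartition) : ℕ := Λ.a.length

/-- the number of parts `N` -/
def len (Λ : SuperPartition) : ℕ := Λ.a.length + Λ.s.length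

/-- the total degree `|Λ|` -/
def deg (Λ : SuperPartition) : ℕ := Λ.a.sum + Λ.s.sum

/-- `Λ*`: the weakly decreasing rearrangement of all the parts -/
def star (Λ : SuperPartition) : List ℕ :=
  (Multiset.sort ((Λ.a ++ Λ.s : List ℕ) : Multiset ℕ) (· ≤ ·)).reverse

/-- `Λ⊛`: the weakly decreasing rearrangement of the parts of `Λˢ`
together with the parts of `Λᵃ` each increased by one -/
def circ (Λ : SuperPartition) : List ℕ :=
  (Multiset.sort ((Λ.a.map (· + 1) ++ Λ.s : List ℕ) : Multiset ℕ) (· ≤ ·)).reverse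

/-- `Λᵢ*` (0-indexed; equal to `0` beyond the length) -/
def starPart (Λ : SuperPartition) (i : ℕ) : ℕ := Λ.star.getD i 0

/-- `Λᵢ⊛` (0-indexed; equal to `0` beyond the length) -/
def circPart (Λ : SuperPartition) (i : ℕ) : ℕ := Λ.circ.getD i 0

/-- `εᵢ(Λ) = Λᵢ⊛ − Λᵢ*` (0-indexed) -/
def eps (Λ : SuperPartition) (i : ℕ) : ℕ := Λ.circPart i - Λ.starPart i

/-- the (0-indexed) rows of the diagram of `Λ` that end with a circle,
listed from top to bottom -/
def circleRows (Λ : SuperPartition) : List ℕ :=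
  (List.range Λ.len).filter (fun i => decide (Λ.circPart i = Λ.starPart i + 1))

end SuperPartition

/-- the `i`-th part (0-indexed) of the conjugate of the partition `L` -/
def conjPart (L : List ℕ) (i : ℕ) : ℕ := (L.filter (fun p => decide (i < p))).length

/-- `Λc` is the conjugate `Λ'` of the superpartition `Λ` (the diagram of
`Λc` is the transpose of the diagram of `Λ`, i.e. both `Λ*` and `Λ⊛` get
conjugated). -/
def SuperPartition.IsConj (Λ Λc : SuperPartition) : Prop :=
  (∀ i, Λc.starPart i = conjPart Λ.star i) ∧ (∀ i, Λc.circPart i = conjPart Λ.circ i)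

/-- The ring `𝒜 = ℚ[x₁,x₂,…] ⊗ ⋀[θ₁,θ₂,…]` of symmetric functions in
superspace, together with its standard structure:  power sums `x`, `θ`,
the elementary and homogeneous bases `e`, `ẽ`, `h`, `h̃` (defined through
their generating series, here encoded by the equivalent recurrences
obtained by comparing coefficients), the derivatives `∂_{x_k}`, `∂_{θ_k}`,
`∂_{ẽ_m}`, the adjoint (`⊥`) map, the scalar product, the automorphisms
`ω` and `ρ` (and the adjoints `ρ^⊥`, `φ^⊥` of `ρ` and `φ = ω ∘ ρ`), and
the four families of Schur functions in superspace. -/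
structure SSF (A : Type*) [Ring A] [Algebra ℚ A] where
  /-- the even power sums `x_k = p_k/k` (for `k ≥ 1`) -/
  x : ℕ → A
  /-- the odd power sums `θ_k` (for `k ≥ 1`) -/
  θ : ℕ → A
  x0 : x 0 = 0
  θ0 : θ 0 = 0
  x_central : ∀ k a, x k * a = a * x k
  θ_anticomm : ∀ j k, θ j * θ k = - (θ k * θ j)
  /-- `A` is free over `ℚ` with basis the supermonomials in the `x`'s and `θ`'s -/
  bas : Module.Basis ((ℕ →₀ ℕ) × Finset ℕ) ℚ A
  bas_eq : ∀ (d : ℕ →₀ ℕ) (T : Finset ℕ), bas (d, T) =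
    ((d.support.sort (· ≤ ·)).map (fun k => x (k+1) ^ d k)).prod *
      ((T.sort (· ≤ ·)).map (fun k => θ (k+1))).prod
  /-- the complete homogeneous functions `h_k`, defined by
  `∑ z^k h_k = exp (∑_{k>0} z^k x_k)` -/
  h : ℕ → A
  /-- the elementary functions `e_k`, defined by
  `∑ z^k e_k = exp (−∑_{k>0} (−z)^k x_k)` -/
  e : ℕ → A
  /-- the odd complete homogeneous functions `h̃_k` -/
  ht : ℕ → A
  /-- the odd elementary functions `ẽ_k` -/
  et : ℕ → A
  h_zero : h 0 = 1
  h_rec : ∀ n : ℕ, ((n : ℚ) + 1) • h (n+1) =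
    ∑ k ∈ Finset.range (n+1), ((k : ℚ) + 1) • (x (k+1) * h (n - k))
  e_zero : e 0 = 1
  e_rec : ∀ n : ℕ, ((n : ℚ) + 1) • e (n+1) =
    ∑ k ∈ Finset.range (n+1), (((-1 : ℚ))^k * ((k : ℚ) + 1)) • (x (k+1) * e (n - k))
  ht_eq : ∀ n : ℕ, ht n = ∑ j ∈ Finset.range (n+1), θ (j+1) * h (n - j)
  et_eq : ∀ n : ℕ, et n = ∑ j ∈ Finset.range (n+1), ((-1 : ℚ))^j • (θ (j+1) * e (n - j))
  /-- the parity (grading) involution, `σ(x_k) = x_k`, `σ(θ_k) = −θ_k` -/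
  σ : A →ₐ[ℚ] A
  σ_x : ∀ k, σ (x k) = x k
  σ_θ : ∀ k, σ (θ k) = - θ k
  /-- the derivative `∂_{x_k}` -/
  Dx : ℕ → Module.End ℚ A
  /-- the (odd) derivative `∂_{θ_k}` -/
  Dθ : ℕ → Module.End ℚ A
  Dx_leibniz : ∀ k a b, Dx k (a * b) = Dx k a * b + a * Dx k b
  Dθ_leibniz : ∀ k a b, Dθ k (a * b) = Dθ k a * b + σ a * Dθ k b
  Dx_x : ∀ k j, 1 ≤ k → Dx k (x j) = if j = k then 1 else 0
  Dx_θ : ∀ k j, Dx k (θ j) = 0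
  Dθ_x : ∀ k j, Dθ k (x j) = 0
  Dθ_θ : ∀ k j, 1 ≤ k → Dθ k (θ j) = if j = k then 1 else 0
  /-- the (odd) derivative `∂_{ẽ_m}` with respect to `ẽ_m` in the free
  presentation `𝒜 = ℚ[e₁,e₂,…] ⊗ ⋀[ẽ₀,ẽ₁,…]` -/
  De : ℕ → Module.End ℚ A
  De_leibniz : ∀ m a b, De m (a * b) = De m a * b + σ a * De m b
  De_e : ∀ m n, De m (e n) = 0
  De_et : ∀ m n, De m (et n) = if n = m then 1 else 0
  /-- the adjoint map `f ↦ f^⊥`, given by the substitutions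
  `x_k ↦ (1/k) ∂_{x_k}` and `θ_k ↦ ∂_{θ_k}` (it is linear and reverses
  products) -/
  perp : A →ₗ[ℚ] Module.End ℚ A
  perp_one : perp 1 = 1
  perp_mul : ∀ a b, perp (a * b) = perp b * perp a
  perp_x : ∀ k, 1 ≤ k → perp (x k) = ((k : ℚ))⁻¹ • Dx k
  perp_θ : ∀ k, 1 ≤ k → perp (θ k) = Dθ k
  /-- the scalar product `⟨·,·⟩` on `𝒜`; on the power-sum basis it is
  `⟨𝒳_Λ, 𝒳_Ω⟩ = δ_{ΛΩ} (−1)^{m(m−1)/2} |Aut(Λˢ)| / ∏ᵢ Λˢᵢ`, which on the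
  (increasingly sorted) supermonomial basis takes the diagonal form below -/
  ip : A →ₗ[ℚ] A →ₗ[ℚ] ℚ
  ip_bas : ∀ (d : ℕ →₀ ℕ) (T : Finset ℕ) (d' : ℕ →₀ ℕ) (T' : Finset ℕ),
    ip (bas (d, T)) (bas (d', T')) =
      if d = d' ∧ T = T' then d.prod (fun k n => (Nat.factorial n : ℚ) / ((k : ℚ) + 1)^n)
      else 0
  /-- `⟨f·a, b⟩ = ⟨a, f^⊥ b⟩` : `perp f` is the adjoint of multiplication by `f` -/
  perp_adj : ∀ f a b, ip (f * a) b = ip a (perp f b)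
  /-- a uniform truncation bound: beyond `bnd f`, the annihilation operators
  kill `f` -/
  bnd : A → ℕ
  bnd_Dθ : ∀ f k, bnd f ≤ k → Dθ k f = 0
  bnd_Dx : ∀ f k, bnd f ≤ k → Dx k f = 0
  bnd_eperp : ∀ f k, bnd f ≤ k → perp (e k) f = 0
  bnd_hperp : ∀ f k, bnd f ≤ k → perp (h k) f = 0
  bnd_etperp : ∀ f k, bnd f ≤ k → perp (et k) f = 0
  bnd_htperp : ∀ f k, bnd f ≤ k → perp (ht k) f = 0
  /-- the automorphism `ω` -/
  ω : A →ₐ[ℚ] A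
  ω_x : ∀ n, 1 ≤ n → ω (x n) = ((-1 : ℚ))^(n-1) • x n
  ω_θ : ∀ n, 1 ≤ n → ω (θ n) = ((-1 : ℚ))^(n-1) • θ n
  ω_invol : ∀ a, ω (ω a) = a
  /-- the automorphism `ρ` -/
  ρ : A →ₐ[ℚ] A
  ρ_x : ∀ n, 1 ≤ n → ρ (x n) = ((-1 : ℚ))^(n-1) • x n
  ρ_θ : ∀ n, 1 ≤ n → ρ (θ n) = et (n-1)
  ρ_invol : ∀ a, ρ (ρ a) = a
  /-- `ρ^⊥`, the adjoint of `ρ` with respect to the scalar product -/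
  ρperp : A →ₗ[ℚ] A
  ρperp_adj : ∀ a b, ip (ρ a) b = ip a (ρperp b)
  /-- `φ^⊥`, the adjoint of `φ = ω ∘ ρ` with respect to the scalar product -/
  φperp : A →ₗ[ℚ] A
  φperp_adj : ∀ a b, ip (ω (ρ a)) b = ip a (φperp b)
  /-- `(φ^⊥)⁻¹`, the inverse of `φ^⊥` -/
  φperpInv : A →ₗ[ℚ] A
  φperpInv_left : ∀ a, φperpInv (φperp a) = a
  φperpInv_right : ∀ a, φperp (φperpInv a) = a
  /-- the type I Schur functions in superspace `s_Λ = P_Λ(q=0, t=0)` -/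
  sI : SuperPartition → A
  /-- the type I* Schur functions in superspace `s*_Λ` (dual basis of the `s_Λ`) -/
  sIstar : SuperPartition → A
  /-- the type II Schur functions in superspace `s̄_Λ = P_Λ(q=∞, t=∞)` -/
  sII : SuperPartition → A
  /-- the type II* Schur functions in superspace `s̄*_Λ` (dual basis of the `s̄_Λ`) -/
  sIIstar : SuperPartition → A
  sI_dual : ∀ Λ Ω, ip (sI Λ) (sIstar Ω) = if Λ = Ω then 1 else 0
  sII_dual : ∀ Λ Ω, ip (sII Λ) (sIIstar Ω) = if Λ = Ω then 1 else 0

/-- the modes of `exp (∑_{n>0} w^n a_n)` where `n • a_n = T n`: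
`expModes T s` is the coefficient of `w^s`. -/
noncomputable def expModes {A : Type*} [Ring A] [Algebra ℚ A] (T : ℕ → A → A) : ℕ → A → A
  | 0 => fun f => f
  | n + 1 => fun f =>
      ((n : ℚ) + 1)⁻¹ • ∑ k ∈ Finset.range (n + 1), T (k + 1) (expModes T (n - k) f)
decreasing_by exact Nat.lt_succ_of_le (Nat.sub_le n k)

namespace SSF

variable {A : Type*} [Ring A] [Algebra ℚ A] (S : SSF A)

/-- `h_n` for `n ∈ ℤ` (with `h_n = 0` for `n < 0`) -/
def hZ (n : ℤ) : A := if 0 ≤ n then S.h n.toNat else 0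

/-- `e_n` for `n ∈ ℤ` (with `e_n = 0` for `n < 0`) -/
def eZ (n : ℤ) : A := if 0 ≤ n then S.e n.toNat else 0

/-- `h̃_n` for `n ∈ ℤ` (with `h̃_n = 0` for `n < 0`) -/
def htZ (n : ℤ) : A := if 0 ≤ n then S.ht n.toNat else 0

/-- `ẽ_n` for `n ∈ ℤ` (with `ẽ_n = 0` for `n < 0`) -/
def etZ (n : ℤ) : A := if 0 ≤ n then S.et n.toNat else 0

/-- `θ_n` for `n ∈ ℤ` (with `θ_n = 0` for `n ≤ 0`) -/
def θZ (n : ℤ) : A := if 1 ≤ n then S.θ n.toNat else 0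

/-- `e_r^⊥` -/
def ePerp (r : ℕ) : A → A := fun f => S.perp (S.e r) f

/-- `h_r^⊥` -/
def hPerp (r : ℕ) : A → A := fun f => S.perp (S.h r) f

/-- `ẽ_r^⊥` -/
def etPerp (r : ℕ) : A → A := fun f => S.perp (S.et r) f

/-- `∂_{ẽ_m} = (−1)^m ∑_{s≥0} h_s ∂_{θ_{m+s+1}}` (explicit locally finite form) -/
def de (m : ℕ) (f : A) : A :=
  ((-1 : ℚ))^m • ∑ s ∈ Finset.range (S.bnd f), S.h s * S.Dθ (m+s+1) f

/-- `∂_{ẽ_m}^⊥ = (−1)^m ∑_{s≥0} θ_{m+s+1} ∘ h_s^⊥` -/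
def deperp (m : ℕ) (f : A) : A :=
  ((-1 : ℚ))^m • ∑ s ∈ Finset.range (S.bnd f), S.θ (m+s+1) * S.perp (S.h s) f

/-- `β_n = ∑_{r>0} θ_{r+n} ∂_{θ_r}` (for `n > 0`) -/
def βp (n : ℕ) (f : A) : A :=
  ∑ r ∈ Finset.range (S.bnd f), S.θ (r+1+n) * S.Dθ (r+1) f

/-- `β_{−n} = ∑_{r>0} θ_r ∂_{θ_{r+n}}` (for `n > 0`) -/
def βm (n : ℕ) (f : A) : A :=
  ∑ r ∈ Finset.range (S.bnd f), S.θ (r+1) * S.Dθ (r+1+n) f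

/-- the modes of `V₊(z) = exp(−∑_{n>0} (zⁿ/n) β_n)`:  `Vp s` is the
coefficient of `z^s` -/
def Vp : ℕ → A → A := expModes (fun k f => - S.βp k f)

/-- the modes of `V₊(z)⁻¹` -/
def VpInv : ℕ → A → A := expModes (fun k f => S.βp k f)

/-- the modes of `V₋(z) = exp(−∑_{n>0} (z⁻ⁿ/(−n)) β_{−n})`:  `Vm s` is the
coefficient of `z^{−s}` -/
def Vm : ℕ → A → A := expModes (fun k f => S.βm k f)

/-- the modes of `V₋(z)⁻¹` -/
def VmInv : ℕ → A → A := expModes (fun k f => - S.βm k f)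

/-- the odd type I Bernstein operator in superspace
`B_n^{(1)} = ∑_{r≥0} (−1)^r θ_{n+r+1} ∘ e_r^⊥` -/
def B1 (n : ℤ) (f : A) : A :=
  ∑ r ∈ Finset.range (S.bnd f), ((-1 : ℚ))^r • (S.θZ (n + (r : ℤ) + 1) * S.ePerp r f)

/-- the even type I Bernstein operator in superspace `B_n^{(0)} = ∂_{ẽ₀} ∘ B_n^{(1)}` -/
def B0 (n : ℤ) (f : A) : A := S.de 0 (S.B1 n f)

/-- `B_n^{(ε)}` -/
def Bmode (n : ℤ) (ε : ℕ) (f : A) : A := if ε = 0 then S.B0 n f else S.B1 n f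

/-- the even type I* Bernstein operator in superspace
`C_n^{(0)} = ∑_{r≥0} (−1)^r h_{n+r} ∘ e_r^⊥` -/
def C0 (n : ℤ) (f : A) : A :=
  ∑ r ∈ Finset.range (S.bnd f), ((-1 : ℚ))^r • (S.hZ (n + (r : ℤ)) * S.ePerp r f)

/-- the odd type I* Bernstein operator in superspace `C_n^{(1)} = ∂_{ẽ₀}^⊥ ∘ C_n^{(0)}` -/
def C1 (n : ℤ) (f : A) : A := S.deperp 0 (S.C0 n f)

/-- `C_n^{(ε)}` -/
def Cmode (n : ℤ) (ε : ℕ) (f : A) : A := if ε = 0 then S.C0 n f else S.C1 n f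

/-- the type II Bernstein operators `B̄_n^{(ε)}`: the modes of
`B̄(z;η) = V₊(z) H(z;η) E^⊥(−z⁻¹) = ∑_{n,ε} z^n η^ε B̄_n^{(ε)}` -/
def Bbar (n : ℤ) (ε : ℕ) (f : A) : A :=
  ∑ r ∈ Finset.range (S.bnd f),
    ((-1 : ℚ))^r •
      ∑ s ∈ Finset.range ((n + (r : ℤ)).toNat + 1),
        S.Vp s
          ((if ε = 0 then S.hZ (n + (r : ℤ) - (s : ℤ)) else S.htZ (n + (r : ℤ) - (s : ℤ))) *
            S.ePerp r f)

/-- the modes `K_n^{(ε)}` of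
`K(z;η) = V₊(z)⁻¹ H(z) (∑_{r≥0} z^{−r} ∂_{θ_{r+1}}) exp(−η θ₁) E^⊥(−z⁻¹)
        = ∑_{n ∈ ℤ} z^n (η K_n^{(0)} + K_n^{(1)})` -/
def Kmode (n : ℤ) (ε : ℕ) (f : A) : A :=
  ∑ j ∈ Finset.range (S.bnd f),
    ((-1 : ℚ))^j •
      (let g : A := if ε = 0 then S.θ 1 * S.ePerp j f else S.ePerp j f
       ∑ r ∈ Finset.range (S.bnd g),
         ∑ u ∈ Finset.range ((n + (r : ℤ) + (j : ℤ)).toNat + 1),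
           S.VpInv u (S.hZ (n + (r : ℤ) + (j : ℤ) - (u : ℤ)) * S.Dθ (r+1) g))

end SSF

/-- `SSF` together with the truncation bounds for the (degree-lowering)
modes of `V₋(z)` and `V₋(z)⁻¹`. -/
structure SSFX (A : Type*) [Ring A] [Algebra ℚ A] extends SSF A where
  bnd_Vm : ∀ (f : A) (u : ℕ), toSSF.bnd f ≤ u → toSSF.Vm u f = 0
  bnd_VmInv : ∀ (f : A) (u : ℕ), toSSF.bnd f ≤ u → toSSF.VmInv u f = 0

namespace SSFX

variable {A : Type*} [Ring A] [Algebra ℚ A] (X : SSFX A)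

/-- the type II* Bernstein operators `C̄_n^{(ε)}`: the modes of
`C̄(z;η) = H(z) c̄(z;η) E^⊥(−z⁻¹) V₋(z) = ∑_{n,ε} z^n η^{1−ε} C̄_n^{(ε)}`,
where `c̄(z;η) = exp(η ∂_{θ₁}) ∑_{r≥0} z^r θ_{r+1}`. -/
def Cbar (n : ℤ) (ε : ℕ) (f : A) : A :=
  ∑ u ∈ Finset.range (X.toSSF.bnd f),
    ∑ j ∈ Finset.range (X.toSSF.bnd (X.toSSF.Vm u f)),
      ((-1 : ℚ))^j •
        ∑ r ∈ Finset.range ((n + (j : ℤ) + (u : ℤ)).toNat + 1),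
          X.toSSF.hZ (n + (j : ℤ) + (u : ℤ) - (r : ℤ)) *
            (if ε = 0
              then X.toSSF.Dθ 1 (X.toSSF.θ (r+1) * X.toSSF.ePerp j (X.toSSF.Vm u f))
              else X.toSSF.θ (r+1) * X.toSSF.ePerp j (X.toSSF.Vm u f))

/-- the modes `L_n^{(ε)}` of
`L(z;η) = H(z) E^⊥(−z⁻¹;η) V₋(z)⁻¹ = ∑_{n ∈ ℤ} z^n (L_n^{(0)} + η L_n^{(1)})` -/
def Lmode (n : ℤ) (ε : ℕ) (f : A) : A :=
  ∑ u ∈ Finset.range (X.toSSF.bnd f),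
    ∑ k ∈ Finset.range (X.toSSF.bnd (X.toSSF.VmInv u f)),
      (((-1 : ℚ))^k * (if ε = 0 then 1 else -1)) •
        (X.toSSF.hZ (n + (k : ℤ) + (u : ℤ)) *
          (if ε = 0 then X.toSSF.ePerp k (X.toSSF.VmInv u f)
           else X.toSSF.etPerp k (X.toSSF.VmInv u f)))

end SSFX

/-- The combinatorial conditions on the pair `(Λ, Ω)` appearing in the
Pieri rule for `e_r s*_Λ`:  `Ω*/Λ*` is a vertical `r`-strip, the fermionic
degrees agree, and the circles move according to the rules: a circle cannot
overpass another one (circles move only downwards, the `j`-th circle of `Λ`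
becoming the `j`-th circle of `Ω`); a circle cannot end up in a row with an
added box; a circle moves only when a (bosonic) box is added to its row, in
which case it is bumped (repeatedly) to the end of the first subsequent row
having no added box.  (In particular `Ω⊛/Λ⊛` is also a vertical strip.) -/
def SuperPartition.EPieriRule (r : ℕ) (Λ Ω : SuperPartition) : Prop :=
  Ω.fdeg = Λ.fdeg ∧
  (∀ i, Λ.starPart i ≤ Ω.starPart i ∧ Ω.starPart i ≤ Λ.starPart i + 1) ∧
  Ω.star.sum = Λ.star.sum + r ∧
  (∀ i, Λ.circPart i ≤ Ω.circPart i ∧ Ω.circPart i ≤ Λ.circPart i + 1) ∧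
  (∀ i, Ω.circPart i = Ω.starPart i + 1 → Ω.starPart i = Λ.starPart i) ∧
  (∀ j, j < Λ.fdeg → Λ.circleRows.getD j 0 ≤ Ω.circleRows.getD j 0) ∧
  (∀ j, j < Λ.fdeg →
    Ω.starPart (Λ.circleRows.getD j 0) = Λ.starPart (Λ.circleRows.getD j 0) →
    Ω.circleRows.getD j 0 = Λ.circleRows.getD j 0) ∧
  (∀ j, j < Λ.fdeg → ∀ i, Λ.circleRows.getD j 0 < i → i < Ω.circleRows.getD j 0 →
    Ω.starPart i = Λ.starPart i + 1)

/-!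
The adjoint `e_r^⊥` is the `r`-th mode of the exponential of a series of derivations in the
`x_k`, so it obeys the coproduct rule `e_r^⊥ (a b) = ∑_{i+j=r} e_i^⊥ a · e_j^⊥ b`. Since
`e_i^⊥ h_t` equals `h_t`, `h_{t-1}`, `0` for `i = 0`, `i = 1`, `i ≥ 2`, and `e_r^⊥` commutes
with every `∂_{θ_k}`, this yields
`e_{r+1}^⊥ ∘ ∂_{ẽ_s} = ∂_{ẽ_s} ∘ e_{r+1}^⊥ - ∂_{ẽ_{s+1}} ∘ e_r^⊥`.
Writing `T(r, s) = (-1)^{r+s} θ_{n+r+s+1} ∘ ∂_{ẽ_s} ∘ e_r^⊥`, the double sum becomes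
`∑_{r,s} (T(r, s) - T(r-1, s+1))`, which telescopes to `∑_r T(r, 0)`.

For the second formula, `∂_{ẽ₀}` is an odd derivation with `∂_{ẽ₀} θ_k = h_{k-1}`, so
`∂_{ẽ₀} (θ_{n+r+1} e_r^⊥ f) = h_{n+r} e_r^⊥ f - θ_{n+r+1} ∂_{ẽ₀} e_r^⊥ f`, and the first
identity rewrites the sum of the second terms.
-/

open Finset

theorem Finset.Nat.sum_antidiagonal_sum_antidiagonal_assoc {M : Type*} [AddCommMonoid M]
    (n : ℕ) (G : ℕ → ℕ → ℕ → M) :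
    ∑ p ∈ antidiagonal n, ∑ q ∈ antidiagonal p.2, G p.1 q.1 q.2
      = ∑ p ∈ antidiagonal n, ∑ q ∈ antidiagonal p.1, G q.1 q.2 p.2 := by
  rw [Finset.sum_sigma', Finset.sum_sigma']
  refine Finset.sum_nbij' (fun x => ⟨(x.1.1 + x.2.1, x.2.2), (x.1.1, x.2.1)⟩)
    (fun x => ⟨(x.2.1, x.2.2 + x.1.2), (x.2.2, x.1.2)⟩) ?_ ?_ ?_ ?_ (fun _ _ => rfl)
  all_goals
    rintro ⟨⟨a, b⟩, ⟨c, d⟩⟩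
    simp only [mem_sigma, HasAntidiagonal.mem_antidiagonal, Sigma.mk.injEq,
      Prod.mk.injEq, heq_eq_eq, and_true, true_and]
    omega

theorem Finset.Nat.sum_antidiagonal_sum_antidiagonal_comm {M : Type*} [AddCommMonoid M]
    (n : ℕ) (G : ℕ → ℕ → ℕ → M) :
    ∑ p ∈ antidiagonal n, ∑ q ∈ antidiagonal p.2, G p.1 q.1 q.2
      = ∑ p ∈ antidiagonal n, ∑ q ∈ antidiagonal p.2, G q.1 p.1 q.2 := by
  rw [Finset.Nat.sum_antidiagonal_sum_antidiagonal_assoc,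
    Finset.Nat.sum_antidiagonal_sum_antidiagonal_assoc n fun i k j => G k i j]
  exact sum_congr rfl fun p _ =>
    (Finset.Nat.sum_antidiagonal_swap (f := fun q => G q.1 q.2 p.2)).symm

theorem Finset.sum_range_sum_range_telescope {M : Type*} [AddCommGroup M]
    (T : ℕ → ℕ → M) (R S : ℕ) (hR : ∀ s, T R s = 0) (hS : ∀ r, T r S = 0) :
    ∑ s ∈ range S, (T 0 s + ∑ r ∈ range R, (T (r + 1) s - T r (s + 1)))
      = ∑ r ∈ range (R + 1), T r 0 := by
  have hcol : ∀ s, T 0 s + ∑ r ∈ range R, (T (r + 1) s - T r (s + 1))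
      = ∑ r ∈ range (R + 1), T r s - ∑ r ∈ range (R + 1), T r (s + 1) := by
    intro s
    rw [sum_sub_distrib, sum_range_succ' (fun r => T r s), sum_range_succ _ R, hR]
    abel
  simp only [hcol, sum_range_sub', hS, sum_const_zero, sub_zero]

namespace SSF

variable {A : Type*} [Ring A] [Algebra ℚ A] (S : SSF A)

theorem Dx_one (k : ℕ) : S.Dx k 1 = 0 := by
  simpa using S.Dx_leibniz k 1 1

theorem mem_center_of_smul_succ_eq_sum (u : ℕ → A) (c : ℕ → ℚ) (h0 : u 0 = 1)
    (hrec : ∀ n : ℕ, ((n : ℚ) + 1) • u (n + 1) =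
      ∑ k ∈ range (n + 1), c k • (S.x (k + 1) * u (n - k))) (n : ℕ) :
    u n ∈ Subalgebra.center ℚ A := by
  induction n using Nat.strong_induction_on with
  | _ n ih =>
    rcases n with _ | n
    · simp [h0]
    have hx : ∀ k, S.x k ∈ Subalgebra.center ℚ A := fun k =>
      Subalgebra.mem_center_iff.mpr fun a => (S.x_central k a).symm
    have hsum : ((n : ℚ) + 1) • u (n + 1) ∈ Subalgebra.center ℚ A := by
      rw [hrec]
      exact Subalgebra.sum_mem _ fun k hk =>
        Subalgebra.smul_mem _ (Subalgebra.mul_mem _ (hx _) (ih _ (by omega))) _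
    simpa [smul_smul, inv_mul_cancel₀ (by positivity : (n : ℚ) + 1 ≠ 0)] using
      Subalgebra.smul_mem _ hsum ((n : ℚ) + 1)⁻¹

theorem h_mul_comm (t : ℕ) (a : A) : S.h t * a = a * S.h t :=
  (Subalgebra.mem_center_iff.mp
    (S.mem_center_of_smul_succ_eq_sum S.h _ S.h_zero S.h_rec t) a).symm

theorem e_mul_comm (r : ℕ) (a : A) : S.e r * a = a * S.e r :=
  (Subalgebra.mem_center_iff.mp
    (S.mem_center_of_smul_succ_eq_sum S.e _ S.e_zero S.e_rec r) a).symm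

theorem perp_e_zero : S.perp (S.e 0) = 1 := by
  rw [S.e_zero, S.perp_one]

theorem Dθ_perp_e_comm {k : ℕ} (hk : 1 ≤ k) (r : ℕ) (a : A) :
    S.Dθ k (S.perp (S.e r) a) = S.perp (S.e r) (S.Dθ k a) := by
  rw [← S.perp_θ k hk, ← Module.End.mul_apply, ← Module.End.mul_apply, ← S.perp_mul,
    ← S.perp_mul, S.e_mul_comm]

theorem hZ_natCast (t : ℕ) : S.hZ t = S.h t := by
  simp [hZ]

theorem hZ_of_neg {z : ℤ} (hz : z < 0) : S.hZ z = 0 := by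
  simp [hZ, not_le.mpr hz]

theorem hZ_rec (m : ℤ) {N : ℕ} (hN : m + 1 ≤ N) :
    ((m : ℚ) + 1) • S.hZ (m + 1)
      = ∑ j ∈ range N, ((j : ℚ) + 1) • (S.x (j + 1) * S.hZ (m - j)) := by
  rcases lt_or_ge m 0 with hm | hm
  · rw [Finset.sum_eq_zero fun j _ => by rw [S.hZ_of_neg (by omega), mul_zero, smul_zero]]
    rcases eq_or_lt_of_le (show m + 1 ≤ 0 by omega) with hm1 | hm1
    · simp [show (m : ℚ) + 1 = 0 by exact_mod_cast hm1]
    · rw [S.hZ_of_neg hm1, smul_zero]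
  lift m to ℕ using hm
  have htail : ∀ j ∈ range N, j ∉ range (m + 1) →
      ((j : ℚ) + 1) • (S.x (j + 1) * S.hZ (m - j)) = 0 := fun j _ hj => by
    rw [S.hZ_of_neg (by simp at hj; omega), mul_zero, smul_zero]
  rw [← Finset.sum_subset (range_subset_range.mpr (by omega)) htail, Int.cast_natCast,
    show (m : ℤ) + 1 = (m + 1 : ℕ) by push_cast; rfl, S.hZ_natCast, S.h_rec]
  refine Finset.sum_congr rfl fun j hj => ?_
  rw [← Nat.cast_sub (by simp at hj; omega), S.hZ_natCast]

theorem Dx_h {k : ℕ} (hk : 1 ≤ k) (t : ℕ) : S.Dx k (S.h t) = S.hZ (t - k) := by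
  induction t using Nat.strong_induction_on with
  | _ t ih =>
    rcases t with _ | n
    · rw [S.h_zero, S.Dx_one, S.hZ_of_neg (by omega)]
    have hcoef : ((n : ℚ) + 1) ≠ 0 := by positivity
    refine (smul_right_injective A hcoef) ?_
    dsimp only
    have hx : ∑ j ∈ range (n + 1), ((j : ℚ) + 1) • (S.Dx k (S.x (j + 1)) * S.h (n - j))
        = (k : ℚ) • S.hZ ((n + 1 : ℕ) - k) := by
      simp only [S.Dx_x k _ hk]
      rcases le_or_gt k (n + 1) with hkn | hkn
      · rw [sum_eq_single (k - 1) (fun j _ hj => by rw [if_neg (by omega), zero_mul, smul_zero])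
          (fun h => absurd (mem_range.mpr (by omega)) h), if_pos (by omega), one_mul,
          ← Nat.cast_sub hkn, S.hZ_natCast, Nat.cast_sub hk, Nat.cast_one, sub_add_cancel]
        congr 2
        omega
      · rw [S.hZ_of_neg (by omega), smul_zero]
        exact sum_eq_zero fun j hj => by
          rw [if_neg (by simp at hj; omega), zero_mul, smul_zero]
    have hh : ∑ j ∈ range (n + 1), ((j : ℚ) + 1) • (S.x (j + 1) * S.Dx k (S.h (n - j)))
        = (((n : ℤ) - k : ℤ) + 1 : ℚ) • S.hZ ((n + 1 : ℕ) - k) := by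
      rw [show ((n + 1 : ℕ) : ℤ) - k = ((n : ℤ) - k) + 1 by push_cast; ring,
        S.hZ_rec ((n : ℤ) - k) (N := n + 1) (by omega)]
      refine sum_congr rfl fun j hj => ?_
      rw [ih (n - j) (by omega)]
      congr 3
      simp at hj
      omega
    rw [← map_smul, S.h_rec, map_sum]
    simp only [map_smul, S.Dx_leibniz, smul_add, sum_add_distrib, hx, hh, ← add_smul]
    congr 1
    push_cast
    ring

theorem Dx_hZ {k : ℕ} (hk : 1 ≤ k) (z : ℤ) : S.Dx k (S.hZ z) = S.hZ (z - k) := by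
  rcases lt_or_ge z 0 with hz | hz
  · rw [S.hZ_of_neg hz, map_zero, S.hZ_of_neg (by omega)]
  · lift z to ℕ using hz
    rw [S.hZ_natCast, S.Dx_h hk]

theorem smul_perp_e_succ_apply (n : ℕ) (a : A) :
    ((n : ℚ) + 1) • S.perp (S.e (n + 1)) a
      = ∑ p ∈ antidiagonal n, (-1 : ℚ) ^ p.1 • S.perp (S.e p.2) (S.Dx (p.1 + 1) a) := by
  rw [← LinearMap.smul_apply, ← map_smul, S.e_rec, map_sum, LinearMap.sum_apply,
    Finset.Nat.sum_antidiagonal_eq_sum_range_succ (fun i j =>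
      (-1 : ℚ) ^ i • S.perp (S.e j) (S.Dx (i + 1) a))]
  refine sum_congr rfl fun k _ => ?_
  have hk : ((k : ℚ) + 1) ≠ 0 := by positivity
  rw [map_smul, S.perp_mul, S.perp_x (k + 1) (by omega), LinearMap.smul_apply,
    Module.End.mul_apply, LinearMap.smul_apply, map_smul, smul_smul, mul_assoc,
    Nat.cast_succ, mul_inv_cancel₀ hk, mul_one]

theorem perp_e_one_apply (a : A) : S.perp (S.e 1) a = S.Dx 1 a := by
  simpa [S.perp_e_zero] using S.smul_perp_e_succ_apply 0 a

theorem perp_e_add_two_hZ (i : ℕ) (z : ℤ) : S.perp (S.e (i + 2)) (S.hZ z) = 0 := by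
  induction i using Nat.strong_induction_on generalizing z with
  | _ i ih =>
    have hcoef : (((i + 1 : ℕ) : ℚ) + 1) ≠ 0 := by positivity
    refine (smul_right_injective A hcoef) ?_
    dsimp only
    rw [smul_zero, S.smul_perp_e_succ_apply, Finset.Nat.sum_antidiagonal_succ',
      sum_eq_single (i, 0)]
    · simp only [S.Dx_hZ (Nat.le_add_left 1 _), S.perp_e_zero, S.perp_e_one_apply,
        Module.End.one_apply, pow_succ]
      rw [show z - ((i + 1 : ℕ) + 1 : ℕ) = z - ((i + 1 : ℕ) : ℤ) - 1 by push_cast; ring]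
      simp
    · rintro ⟨j, l⟩ hp hne
      obtain ⟨l, rfl⟩ : ∃ l', l = l' + 1 := ⟨l - 1, by
        rw [HasAntidiagonal.mem_antidiagonal] at hp; simp at hne; omega⟩
      rw [HasAntidiagonal.mem_antidiagonal] at hp
      dsimp only at hp ⊢
      rw [S.Dx_hZ (by omega), ih l (by omega), smul_zero]
    · simp

theorem perp_e_mul (r : ℕ) (a b : A) :
    S.perp (S.e r) (a * b)
      = ∑ p ∈ antidiagonal r, S.perp (S.e p.1) a * S.perp (S.e p.2) b := by
  induction r using Nat.strong_induction_on generalizing a b with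
  | _ r ih =>
    rcases r with _ | n
    · simp [S.perp_e_zero]
    have hcoef : ((n : ℚ) + 1) ≠ 0 := by positivity
    refine (smul_right_injective A hcoef) ?_
    dsimp only
    have hweight :
        ((n : ℚ) + 1) • ∑ p ∈ antidiagonal (n + 1), S.perp (S.e p.1) a * S.perp (S.e p.2) b
          = ∑ p ∈ antidiagonal (n + 1), ((p.1 : ℚ) • S.perp (S.e p.1) a) * S.perp (S.e p.2) b
            + ∑ p ∈ antidiagonal (n + 1),
                S.perp (S.e p.1) a * ((p.2 : ℚ) • S.perp (S.e p.2) b) := by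
      rw [smul_sum, ← sum_add_distrib]
      refine sum_congr rfl fun p hp => ?_
      rw [smul_mul_assoc, mul_smul_comm, ← add_smul]
      rw [HasAntidiagonal.mem_antidiagonal] at hp
      congr 1
      exact_mod_cast (by omega : n + 1 = p.1 + p.2)
    have hleft :
        ∑ p ∈ antidiagonal (n + 1), ((p.1 : ℚ) • S.perp (S.e p.1) a) * S.perp (S.e p.2) b
          = ∑ p ∈ antidiagonal n, ∑ q ∈ antidiagonal p.2,
            (-1 : ℚ) ^ p.1 • (S.perp (S.e q.1) (S.Dx (p.1 + 1) a) * S.perp (S.e q.2) b) := by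
      rw [Finset.Nat.sum_antidiagonal_sum_antidiagonal_assoc n fun k i j =>
        (-1 : ℚ) ^ k • (S.perp (S.e i) (S.Dx (k + 1) a) * S.perp (S.e j) b),
        Finset.Nat.sum_antidiagonal_succ]
      simp only [Nat.cast_zero, zero_smul, zero_mul, zero_add, Nat.cast_succ,
        S.smul_perp_e_succ_apply, sum_mul, smul_mul_assoc]
    have hright :
        ∑ p ∈ antidiagonal (n + 1), S.perp (S.e p.1) a * ((p.2 : ℚ) • S.perp (S.e p.2) b)
          = ∑ p ∈ antidiagonal n, ∑ q ∈ antidiagonal p.2,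
            (-1 : ℚ) ^ p.1 • (S.perp (S.e q.1) a * S.perp (S.e q.2) (S.Dx (p.1 + 1) b)) := by
      rw [Finset.Nat.sum_antidiagonal_sum_antidiagonal_comm n fun k i j =>
        (-1 : ℚ) ^ k • (S.perp (S.e i) a * S.perp (S.e j) (S.Dx (k + 1) b)),
        Finset.Nat.sum_antidiagonal_succ']
      simp only [Nat.cast_zero, zero_smul, mul_zero, zero_add, Nat.cast_succ,
        S.smul_perp_e_succ_apply, mul_sum, mul_smul_comm]
    rw [hweight, hleft, hright, ← sum_add_distrib, S.smul_perp_e_succ_apply]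
    refine sum_congr rfl fun p hp => ?_
    rw [HasAntidiagonal.mem_antidiagonal] at hp
    rw [S.Dx_leibniz, map_add, ih p.2 (by omega), ih p.2 (by omega), smul_add, smul_sum,
      smul_sum]

theorem perp_e_succ_h_succ_mul (r t : ℕ) (g : A) :
    S.perp (S.e (r + 1)) (S.h (t + 1) * g)
      = S.h (t + 1) * S.perp (S.e (r + 1)) g + S.h t * S.perp (S.e r) g := by
  rw [S.perp_e_mul, Finset.Nat.sum_antidiagonal_succ, sum_eq_single (0, r)]
  · simp [S.perp_e_zero, S.perp_e_one_apply, S.Dx_h le_rfl, S.hZ_natCast]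
  · rintro ⟨i, j⟩ hp hne
    rw [HasAntidiagonal.mem_antidiagonal] at hp
    obtain ⟨i, rfl⟩ : ∃ i', i = i' + 1 := ⟨i - 1, by simp at hne; omega⟩
    rw [← S.hZ_natCast, S.perp_e_add_two_hZ, zero_mul]
  · simp

theorem de_eq_sum_of_bnd_le (m : ℕ) {f : A} {M : ℕ} (hM : S.bnd f ≤ M) :
    S.de m f = (-1 : ℚ) ^ m • ∑ t ∈ range M, S.h t * S.Dθ (m + t + 1) f := by
  rw [de, sum_subset (range_subset_range.mpr hM) fun t _ ht => by
    rw [S.bnd_Dθ f _ (by simp at ht; omega), mul_zero]]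

theorem de_add (m : ℕ) (a b : A) : S.de m (a + b) = S.de m a + S.de m b := by
  have hde (g : A) (hg : S.bnd g ≤ S.bnd (a + b) + S.bnd a + S.bnd b) :=
    S.de_eq_sum_of_bnd_le m hg
  rw [hde (a + b) (by omega), hde a (by omega), hde b (by omega), ← smul_add, ← sum_add_distrib]
  simp only [map_add, mul_add]

theorem de_smul (m : ℕ) (c : ℚ) (a : A) : S.de m (c • a) = c • S.de m a := by
  have hde (g : A) (hg : S.bnd g ≤ S.bnd (c • a) + S.bnd a) := S.de_eq_sum_of_bnd_le m hg
  rw [hde (c • a) (by omega), hde a (by omega), smul_comm c]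
  simp only [map_smul, mul_smul_comm, smul_sum]

def deLinear (m : ℕ) : A →ₗ[ℚ] A where
  toFun := S.de m
  map_add' := S.de_add m
  map_smul' := S.de_smul m

theorem de_zero (m : ℕ) : S.de m 0 = 0 :=
  map_zero (S.deLinear m)

theorem de_mul (m : ℕ) (a b : A) : S.de m (a * b) = S.de m a * b + S.σ a * S.de m b := by
  have hde (g : A) (hg : S.bnd g ≤ S.bnd (a * b) + S.bnd a + S.bnd b) :=
    S.de_eq_sum_of_bnd_le m hg
  rw [hde (a * b) (by omega), hde a (by omega), hde b (by omega), smul_mul_assoc,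
    mul_smul_comm, ← smul_add, sum_mul, mul_sum, ← sum_add_distrib]
  congr 1
  refine sum_congr rfl fun t _ => ?_
  rw [S.Dθ_leibniz, mul_add, ← mul_assoc, ← mul_assoc, ← mul_assoc, S.h_mul_comm t (S.σ a)]

theorem σ_θZ (k : ℤ) : S.σ (S.θZ k) = -S.θZ k := by
  unfold θZ
  split_ifs
  · exact S.σ_θ _
  · rw [map_zero, neg_zero]

theorem de_θZ (m : ℕ) (k : ℤ) : S.de m (S.θZ k) = (-1 : ℚ) ^ m • S.hZ (k - m - 1) := by
  rcases lt_or_ge k 1 with hk | hk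
  · rw [θZ, if_neg (by omega), S.de_zero, S.hZ_of_neg (by omega), smul_zero]
  lift k to ℕ using (by omega)
  rw [θZ, if_pos hk, Int.toNat_natCast,
    S.de_eq_sum_of_bnd_le m (f := S.θ k) (M := S.bnd (S.θ k) + k) (by omega)]
  congr 1
  simp only [S.Dθ_θ _ k (Nat.le_add_left 1 _), mul_ite, mul_one, mul_zero]
  rcases lt_or_ge k (m + 1) with hkm | hkm
  · rw [S.hZ_of_neg (by omega)]
    exact sum_eq_zero fun t _ => if_neg (by omega)
  · rw [sum_eq_single (k - m - 1) (fun t _ ht => if_neg (by omega))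
      (fun h => absurd (mem_range.mpr (by omega)) h), if_pos (by omega),
      show (k : ℤ) - m - 1 = ((k - m - 1 : ℕ) : ℤ) by omega, S.hZ_natCast]

theorem de_perp_e_eq_zero {m : ℕ} (r : ℕ) {f : A} (hm : S.bnd f ≤ m) :
    S.de m (S.perp (S.e r) f) = 0 := by
  rw [de, sum_eq_zero fun t _ => by
    rw [S.Dθ_perp_e_comm (Nat.le_add_left 1 _), S.bnd_Dθ f _ (by omega), map_zero, mul_zero],
    smul_zero]

theorem perp_e_succ_de (r s : ℕ) (f : A) :
    S.perp (S.e (r + 1)) (S.de s f)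
      = S.de s (S.perp (S.e (r + 1)) f) - S.de (s + 1) (S.perp (S.e r) f) := by
  set M := S.bnd f + S.bnd (S.perp (S.e (r + 1)) f) + S.bnd (S.perp (S.e r) f)
  rw [S.de_eq_sum_of_bnd_le s (f := f) (M := M + 1) (by omega),
    S.de_eq_sum_of_bnd_le s (f := S.perp (S.e (r + 1)) f) (M := M + 1) (by omega),
    S.de_eq_sum_of_bnd_le (s + 1) (f := S.perp (S.e r) f) (M := M) (by omega),
    map_smul, map_sum, sum_range_succ', sum_range_succ' _ M]
  simp only [S.perp_e_succ_h_succ_mul, sum_add_distrib,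
    S.Dθ_perp_e_comm (Nat.le_add_left 1 _)]
  have hidx (x : ℕ) : s + (x + 1) + 1 = s + 1 + x + 1 := by omega
  rw [pow_succ, mul_neg_one, neg_smul, sub_neg_eq_add, ← smul_add]
  simp only [S.h_zero, one_mul, add_zero, hidx]
  rw [add_right_comm]

theorem B0_eq_sub (n : ℤ) (f : A) :
    S.B0 n f
      = ∑ r ∈ range (S.bnd f), (-1 : ℚ) ^ r • (S.hZ (n + r) * S.ePerp r f)
        - ∑ r ∈ range (S.bnd f), (-1 : ℚ) ^ r • (S.θZ (n + r + 1) * S.de 0 (S.ePerp r f)) := by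
  rw [B0, B1, ← sum_sub_distrib]
  refine (map_sum (S.deLinear 0) _ _).trans (sum_congr rfl fun r _ => ?_)
  change S.de 0 _ = _
  rw [S.de_smul, S.de_mul, S.de_θZ, S.σ_θZ, pow_zero, one_smul, neg_mul, ← sub_eq_add_neg,
    smul_sub, Nat.cast_zero, sub_zero, add_sub_cancel_right]

theorem sum_θZ_mul_ePerp_de (n : ℤ) (f : A) :
    ∑ s ∈ range (S.bnd f), ∑ r ∈ range (S.bnd (S.de s f)),
        (-1 : ℚ) ^ (r + s) • (S.θZ (n + r + s + 1) * S.ePerp r (S.de s f))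
      = ∑ r ∈ range (S.bnd f), (-1 : ℚ) ^ r • (S.θZ (n + r + 1) * S.de 0 (S.ePerp r f)) := by
  set T : ℕ → ℕ → A := fun r s =>
    (-1 : ℚ) ^ (r + s) • (S.θZ (n + r + s + 1) * S.de s (S.perp (S.e r) f)) with hT
  set R := S.bnd f + ∑ s ∈ range (S.bnd f), S.bnd (S.de s f)
  have hcol : ∀ s ∈ range (S.bnd f),
      ∑ r ∈ range (S.bnd (S.de s f)),
          (-1 : ℚ) ^ (r + s) • (S.θZ (n + r + s + 1) * S.ePerp r (S.de s f))
        = T 0 s + ∑ r ∈ range R, (T (r + 1) s - T r (s + 1)) := by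
    intro s hs
    have hR : S.bnd (S.de s f) ≤ R + 1 := by
      have := single_le_sum (f := fun s => S.bnd (S.de s f)) (fun _ _ => Nat.zero_le _) hs
      omega
    rw [sum_subset (range_subset_range.mpr hR) fun r _ hr => by
      rw [ePerp, S.bnd_eperp _ r (by simp at hr; omega), mul_zero, smul_zero],
      sum_range_succ', add_comm]
    congr 1
    · simp [hT, ePerp, S.perp_e_zero]
    · refine sum_congr rfl fun r _ => ?_
      simp only [hT, ePerp]
      rw [S.perp_e_succ_de, mul_sub, smul_sub, show r + (s + 1) = r + 1 + s by omega,
        show n + r + (s + 1 : ℕ) + 1 = n + (r + 1 : ℕ) + s + 1 by push_cast; ring]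
  have hTR (s : ℕ) : T R s = 0 := by
    simp only [hT]
    rw [S.bnd_eperp f R (by omega), S.de_zero, mul_zero, smul_zero]
  have hTS (r : ℕ) : T r (S.bnd f) = 0 := by
    simp only [hT]
    rw [S.de_perp_e_eq_zero r le_rfl, mul_zero, smul_zero]
  rw [sum_congr rfl hcol, sum_range_sum_range_telescope T R _ hTR hTS]
  simp only [hT, ePerp, add_zero, Nat.cast_zero]
  refine (sum_subset (range_subset_range.mpr (by omega)) fun r _ hr => ?_).symm
  rw [S.bnd_eperp f r (by simp at hr; omega), S.de_zero, mul_zero, smul_zero]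

end SSF

/-- For every `n ∈ ℤ`,
`∑_{r,s≥0} (−1)^{r+s} θ_{n+r+s+1} ∘ e_r^⊥ ∘ ∂_{ẽ_s}
  = ∑_{r≥0} (−1)^r θ_{n+r+1} ∘ ∂_{ẽ₀} ∘ e_r^⊥`,
and consequently the even type-I Bernstein operator
`B_n^{(0)} = ∂_{ẽ₀} ∘ B_n^{(1)}` equals
`∑_{r≥0} (−1)^r h_{n+r} ∘ e_r^⊥ − ∑_{r,s≥0} (−1)^{r+s} θ_{n+r+s+1} ∘ e_r^⊥ ∘ ∂_{ẽ_s}`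
(all sums are locally finite and rendered with the truncation bound `bnd`). -/
theorem B0_explicit {A : Type*} [Ring A] [Algebra ℚ A]
    (S : SSF A) (n : ℤ) (f : A) :
    (∑ s ∈ Finset.range (S.bnd f), ∑ r ∈ Finset.range (S.bnd (S.de s f)),
        ((-1 : ℚ))^(r+s) • (S.θZ (n + (r : ℤ) + (s : ℤ) + 1) * S.ePerp r (S.de s f)))
      = (∑ r ∈ Finset.range (S.bnd f),
          ((-1 : ℚ))^r • (S.θZ (n + (r : ℤ) + 1) * S.de 0 (S.ePerp r f)))
    ∧ S.B0 n f
      = (∑ r ∈ Finset.range (S.bnd f),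
          ((-1 : ℚ))^r • (S.hZ (n + (r : ℤ)) * S.ePerp r f))
        - (∑ s ∈ Finset.range (S.bnd f), ∑ r ∈ Finset.range (S.bnd (S.de s f)),
            ((-1 : ℚ))^(r+s) • (S.θZ (n + (r : ℤ) + (s : ℤ) + 1) * S.ePerp r (S.de s f))) := by
  rw [S.sum_θZ_mul_ePerp_de]
  exact ⟨rfl, S.B0_eq_sub n f⟩
end
end

section
/- For every n ≥ 1, the following operator identity holds on the ring of symmetric functions in superspace: ρ ∘ ∂_{xₙ} ∘ ρ = (−1)^{n−1} ( ∂_{xₙ} + β_{−n} ), where β_{−n} = Σ_{r>0} θ_r ∂_{θ_{r+n}}. -/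
/-!
Common setup: the ring of symmetric functions in superspace
`𝒜 = ℚ[x₁,x₂,…] ⊗ ⋀[θ₁,θ₂,…]`, axiomatised as a structure `SSF` on a
ℚ-algebra `A`, together with superpartitions and the various derived
operators (Bernstein operators in superspace of the four types, etc.).

Conventions:
* `x k`, `θ k` are the (normalized) power sums; they are meaningful for
  `k ≥ 1` and we set `x 0 = θ 0 = 0`.
* All "locally finite" infinite sums of operators `∑_{r ≥ 0}` are rendered
  as finite sums `∑ r ∈ Finset.range (bnd f)` where `bnd f` is a bound
  beyond which all relevant operators annihilate `f`.
-/

open scoped BigOperators Classical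

noncomputable section

/-!
Both sides are `ℚ`-linear and satisfy the even Leibniz rule: `∂_{xₙ}` does, `β_{−n}` does because
each `θ_r ∂_{θ_{r+n}}` is a product of two odd factors, and conjugation by the involutive algebra
automorphism `ρ` preserves the rule. Such maps are determined by their values on the generators
`x_k`, `θ_k`. On `x_k` both sides give `δ_{kn}`. On `θ_{k+1}` one uses `ρ(θ_{k+1}) = ẽ_k` and
`∂_{xₙ} ẽ_q = (−1)^{n−1} ẽ_{q−n}`, which comes from `∂_{xₙ} e_p = (−1)^{n−1} e_{p−n}`, proved by
induction on `p` through Newton's recurrence for `e_p`; both sides then equal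
`(−1)^{n−1} θ_{k+1−n}`.
-/

theorem Finset.sum_range_ite_le_sub {M : Type*} [AddCommMonoid M] (g : ℕ → ℕ → M) (m p : ℕ) :
    ∑ k ∈ Finset.range (p + 1), (if m ≤ p - k then g k (p - k - m) else 0) =
      if m ≤ p then ∑ k ∈ Finset.range (p - m + 1), g k (p - m - k) else 0 := by
  split_ifs with hmp
  · rw [← Finset.sum_subset (Finset.range_subset_range.2 (by omega : p - m + 1 ≤ p + 1))]
    · refine Finset.sum_congr rfl fun k hk => ?_
      rw [Finset.mem_range] at hk
      rw [if_pos (by omega), Nat.sub_right_comm]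
    · intro k hk hk'
      rw [Finset.mem_range] at hk hk'
      rw [if_neg (by omega)]
  · exact Finset.sum_eq_zero fun k _ => if_neg (by omega)

-- Mathlib's `Derivation` needs a commutative algebra; `𝒜` is only supercommutative.
def IsLeibniz {R A : Type*} [CommRing R] [Ring A] [Algebra R A] (D : A →ₗ[R] A) : Prop :=
  ∀ a b, D (a * b) = D a * b + a * D b

namespace IsLeibniz

variable {R A : Type*} [CommRing R] [Ring A] [Algebra R A] {D D' : A →ₗ[R] A}

theorem map_one (hD : IsLeibniz D) : D 1 = 0 := by
  simpa using hD 1 1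

theorem map_algebraMap (hD : IsLeibniz D) (r : R) : D (algebraMap R A r) = 0 := by
  rw [Algebra.algebraMap_eq_smul_one, map_smul, hD.map_one, smul_zero]

theorem add (hD : IsLeibniz D) (hD' : IsLeibniz D') : IsLeibniz (D + D') := by
  intro a b
  simp only [LinearMap.add_apply, hD a b, hD' a b, add_mul, mul_add]
  abel

theorem smul (hD : IsLeibniz D) (c : R) : IsLeibniz (c • D) := by
  intro a b
  simp only [LinearMap.smul_apply, hD a b, smul_add, smul_mul_assoc, mul_smul_comm]

theorem conj (hD : IsLeibniz D) (φ ψ : A →ₐ[R] A) (hψφ : ∀ a, ψ (φ a) = a) :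
    IsLeibniz (ψ.toLinearMap ∘ₗ D ∘ₗ φ.toLinearMap) := by
  intro a b
  simp only [LinearMap.comp_apply, AlgHom.toLinearMap_apply, map_mul]
  rw [hD, map_add, map_mul, map_mul, hψφ, hψφ]

theorem ext_of_adjoin_eq_top (hD : IsLeibniz D) (hD' : IsLeibniz D') {s : Set A}
    (hs : Algebra.adjoin R s = ⊤) (h : Set.EqOn D D' s) : D = D' := by
  ext a
  induction (hs ▸ Algebra.mem_top : a ∈ Algebra.adjoin R s) using Algebra.adjoin_induction with
  | mem x hx => exact h hx
  | algebraMap r => rw [hD.map_algebraMap, hD'.map_algebraMap]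
  | add x y _ _ hx hy => rw [map_add, map_add, hx, hy]
  | mul x y _ _ hx hy => rw [hD, hD', hx, hy]

end IsLeibniz

namespace SSF

variable {A : Type*} [Ring A] [Algebra ℚ A] (S : SSF A)

def generators : Set A := Set.range (fun k => S.x (k + 1)) ∪ Set.range (fun k => S.θ (k + 1))

theorem adjoin_generators_eq_top : Algebra.adjoin ℚ S.generators = ⊤ := by
  refine eq_top_iff.2 fun a _ => ?_
  have ha : a ∈ Submodule.span ℚ (Set.range S.bas) := S.bas.span_eq ▸ Submodule.mem_top
  refine (Submodule.span_le (p := Subalgebra.toSubmodule (Algebra.adjoin ℚ S.generators))).2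
    ?_ ha
  rintro _ ⟨⟨d, T⟩, rfl⟩
  rw [SetLike.mem_coe, Subalgebra.mem_toSubmodule, S.bas_eq]
  refine mul_mem (Subalgebra.list_prod_mem _ ?_) (Subalgebra.list_prod_mem _ ?_) <;>
    rintro _ hk <;> obtain ⟨k, _, rfl⟩ := List.mem_map.1 hk
  · exact Subalgebra.pow_mem _
      (Algebra.subset_adjoin (Set.mem_union_left _ (Set.mem_range_self k))) _
  · exact Algebra.subset_adjoin (Set.mem_union_right _ (Set.mem_range_self k))

theorem θ_mul_σ (k : ℕ) (a : A) : S.θ k * S.σ a = a * S.θ k := by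
  induction (S.adjoin_generators_eq_top ▸ Algebra.mem_top : a ∈ Algebra.adjoin ℚ S.generators)
    using Algebra.adjoin_induction with
  | mem x hx =>
    rcases hx with ⟨j, rfl⟩ | ⟨j, rfl⟩
    · rw [S.σ_x, S.x_central]
    · rw [S.σ_θ, mul_neg, S.θ_anticomm, neg_neg]
  | algebraMap r => rw [AlgHom.commutes, Algebra.commutes]
  | add x y _ _ hx hy => rw [map_add, mul_add, hx, hy, add_mul]
  | mul x y _ _ hx hy => rw [map_mul, ← mul_assoc, hx, mul_assoc, hy, mul_assoc]

theorem βm_eq_sum_of_bnd_le (n : ℕ) {f : A} {M : ℕ} (hM : S.bnd f ≤ M) :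
    S.βm n f = ∑ r ∈ Finset.range M, S.θ (r + 1) * S.Dθ (r + 1 + n) f :=
  Finset.sum_subset (Finset.range_subset_range.2 hM) fun r _ hr => by
    rw [Finset.mem_range, not_lt] at hr
    rw [S.bnd_Dθ f _ (by omega), mul_zero]

theorem βm_add (n : ℕ) (a b : A) : S.βm n (a + b) = S.βm n a + S.βm n b := by
  rw [S.βm_eq_sum_of_bnd_le n (M := S.bnd (a + b) + S.bnd a + S.bnd b) (by omega),
    S.βm_eq_sum_of_bnd_le n (M := S.bnd (a + b) + S.bnd a + S.bnd b) (f := a) (by omega),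
    S.βm_eq_sum_of_bnd_le n (M := S.bnd (a + b) + S.bnd a + S.bnd b) (f := b) (by omega),
    ← Finset.sum_add_distrib]
  simp only [map_add, mul_add]

theorem βm_smul (n : ℕ) (c : ℚ) (a : A) : S.βm n (c • a) = c • S.βm n a := by
  rw [S.βm_eq_sum_of_bnd_le n (M := S.bnd (c • a) + S.bnd a) (by omega),
    S.βm_eq_sum_of_bnd_le n (M := S.bnd (c • a) + S.bnd a) (f := a) (by omega), Finset.smul_sum]
  simp only [map_smul, mul_smul_comm]

def βmLinear (n : ℕ) : Module.End ℚ A where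
  toFun := S.βm n
  map_add' := S.βm_add n
  map_smul' := S.βm_smul n

theorem isLeibniz_βmLinear (n : ℕ) : IsLeibniz (S.βmLinear n) := by
  intro a b
  change S.βm n (a * b) = S.βm n a * b + a * S.βm n b
  rw [S.βm_eq_sum_of_bnd_le n (M := S.bnd (a * b) + S.bnd a + S.bnd b) (by omega),
    S.βm_eq_sum_of_bnd_le n (M := S.bnd (a * b) + S.bnd a + S.bnd b) (f := a) (by omega),
    S.βm_eq_sum_of_bnd_le n (M := S.bnd (a * b) + S.bnd a + S.bnd b) (f := b) (by omega),
    Finset.sum_mul, Finset.mul_sum, ← Finset.sum_add_distrib]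
  refine Finset.sum_congr rfl fun r _ => ?_
  -- the odd `θ_r` moves past `a` at the cost of the parity sign produced by the odd `∂_θ`
  rw [S.Dθ_leibniz, mul_add, ← mul_assoc, ← mul_assoc, S.θ_mul_σ, mul_assoc, mul_assoc]

theorem βm_x (n k : ℕ) : S.βm n (S.x k) = 0 :=
  Finset.sum_eq_zero fun r _ => by rw [S.Dθ_x, mul_zero]

-- for `m ≤ n` the right side is `θ 0 = 0`
theorem βm_θ (n m : ℕ) : S.βm n (S.θ m) = S.θ (m - n) := by
  rw [S.βm_eq_sum_of_bnd_le n (le_add_right le_rfl : S.bnd (S.θ m) ≤ S.bnd (S.θ m) + m)]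
  simp only [S.Dθ_θ _ _ (Nat.le_add_left 1 _ |>.trans (Nat.le_add_right _ n)), mul_ite, mul_one,
    mul_zero]
  rcases lt_or_ge n m with hnm | hmn
  · obtain ⟨r, rfl⟩ := Nat.exists_eq_add_of_lt hnm
    rw [Finset.sum_congr rfl fun x _ =>
        if_congr (by omega : n + r + 1 = x + 1 + n ↔ x = r) rfl rfl,
      Finset.sum_ite_eq', if_pos (Finset.mem_range.2 (by omega))]
    congr 1
    omega
  · rw [Nat.sub_eq_zero_of_le hmn, S.θ0]
    exact Finset.sum_eq_zero fun r _ => if_neg (by omega)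

theorem isLeibniz_Dx (n : ℕ) : IsLeibniz (S.Dx n) := S.Dx_leibniz n

theorem Dx_succ_e_succ_smul (n p : ℕ) :
    ((p : ℚ) + 1) • S.Dx (n + 1) (S.e (p + 1)) =
      (if n ≤ p then ((-1 : ℚ) ^ n * ((n : ℚ) + 1)) • S.e (p - n) else 0) +
        ∑ k ∈ Finset.range (p + 1),
          ((-1 : ℚ) ^ k * ((k : ℚ) + 1)) • (S.x (k + 1) * S.Dx (n + 1) (S.e (p - k))) := by
  rw [← map_smul, S.e_rec, map_sum]
  simp only [map_smul, S.Dx_leibniz, S.Dx_x _ _ (Nat.le_add_left 1 n), smul_add,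
    Finset.sum_add_distrib, ite_mul, one_mul, zero_mul, smul_ite, smul_zero, add_left_inj,
    Finset.sum_ite_eq', Finset.mem_range, Nat.lt_succ_iff]

theorem Dx_succ_e (n p : ℕ) :
    S.Dx (n + 1) (S.e p) = if n + 1 ≤ p then ((-1 : ℚ) ^ n) • S.e (p - (n + 1)) else 0 := by
  induction p using Nat.strong_induction_on with
  | _ p ih =>
  cases p with
  | zero => rw [S.e_zero, (S.isLeibniz_Dx _).map_one, if_neg (by omega)]
  | succ p =>
  refine smul_right_injective A (by positivity : (p : ℚ) + 1 ≠ 0) ?_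
  have hsum : ∑ k ∈ Finset.range (p + 1),
      ((-1 : ℚ) ^ k * ((k : ℚ) + 1)) • (S.x (k + 1) * S.Dx (n + 1) (S.e (p - k))) =
      if n + 1 ≤ p then
        ((-1 : ℚ) ^ n * (((p - (n + 1) : ℕ) : ℚ) + 1)) • S.e (p - (n + 1) + 1) else 0 := by
    rw [Finset.sum_congr rfl fun k hk => by
      rw [ih (p - k) (by rw [Finset.mem_range] at hk; omega)]]
    simp only [mul_ite, smul_ite, mul_zero, smul_zero]
    rw [Finset.sum_range_ite_le_sub
      (fun k q => ((-1 : ℚ) ^ k * ((k : ℚ) + 1)) • (S.x (k + 1) * (-1 : ℚ) ^ n • S.e q))]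
    split_ifs
    · rw [mul_smul, S.e_rec, Finset.smul_sum]
      refine Finset.sum_congr rfl fun k _ => ?_
      rw [mul_smul_comm, smul_comm]
    · rfl
  dsimp only
  rw [S.Dx_succ_e_succ_smul, hsum]
  rcases lt_trichotomy n p with hnp | rfl | hpn
  · rw [if_pos hnp.le, if_pos (show n + 1 ≤ p from hnp), if_pos (by omega),
      show p - (n + 1) + 1 = p - n by omega, show p + 1 - (n + 1) = p - n by omega, ← add_smul,
      smul_smul]
    congr 1
    push_cast [Nat.cast_sub hnp]
    ring
  · rw [if_pos le_rfl, if_neg (by omega), if_pos le_rfl, add_zero, Nat.sub_self, Nat.sub_self,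
      smul_smul]
    congr 1
    ring
  · rw [if_neg (by omega), if_neg (by omega), if_neg (by omega), add_zero, smul_zero]

theorem Dx_succ_et (n q : ℕ) :
    S.Dx (n + 1) (S.et q) = if n + 1 ≤ q then ((-1 : ℚ) ^ n) • S.et (q - (n + 1)) else 0 := by
  rw [S.et_eq, map_sum]
  simp only [map_smul, S.Dx_leibniz, S.Dx_θ, zero_mul, zero_add, S.Dx_succ_e, mul_ite, mul_zero,
    smul_ite, smul_zero]
  rw [Finset.sum_range_ite_le_sub
    (fun j r => ((-1 : ℚ) ^ j) • (S.θ (j + 1) * ((-1 : ℚ) ^ n) • S.e r))]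
  split_ifs
  · rw [S.et_eq, Finset.smul_sum]
    refine Finset.sum_congr rfl fun j _ => ?_
    rw [mul_smul_comm, smul_comm]
  · rfl

theorem ρ_et (q : ℕ) : S.ρ (S.et q) = S.θ (q + 1) := by
  rw [← S.ρ_invol (S.θ (q + 1)), S.ρ_θ _ (Nat.le_add_left 1 q), Nat.add_sub_cancel]

theorem ρ_Dx_succ_ρ_x (n k : ℕ) :
    S.ρ (S.Dx (n + 1) (S.ρ (S.x (k + 1)))) =
      (-1 : ℚ) ^ n • (S.Dx (n + 1) (S.x (k + 1)) + S.βm (n + 1) (S.x (k + 1))) := by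
  rw [S.ρ_x _ (Nat.le_add_left 1 k), map_smul, map_smul, S.Dx_x _ _ (Nat.le_add_left 1 n),
    S.βm_x, add_zero, Nat.add_sub_cancel]
  split_ifs with h
  · rw [map_one, show k = n by omega]
  · rw [map_zero, smul_zero, smul_zero]

theorem ρ_Dx_succ_ρ_θ (n k : ℕ) :
    S.ρ (S.Dx (n + 1) (S.ρ (S.θ (k + 1)))) =
      (-1 : ℚ) ^ n • (S.Dx (n + 1) (S.θ (k + 1)) + S.βm (n + 1) (S.θ (k + 1))) := by
  rw [S.ρ_θ _ (Nat.le_add_left 1 k), Nat.add_sub_cancel, S.Dx_succ_et, S.Dx_θ, zero_add,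
    S.βm_θ]
  split_ifs with h
  · rw [map_smul, S.ρ_et, show k - (n + 1) + 1 = k + 1 - (n + 1) by omega]
  · rw [map_zero, Nat.sub_eq_zero_of_le (by omega), S.θ0, smul_zero]

end SSF

/-- For every `n ≥ 1`,
`ρ ∘ ∂_{x_n} ∘ ρ = (−1)^{n−1} (∂_{x_n} + β_{−n})`, where
`β_{−n} = ∑_{r>0} θ_r ∂_{θ_{r+n}}`. -/
theorem rho_conj_Dx {A : Type*} [Ring A] [Algebra ℚ A]
    (S : SSF A) (n : ℕ) (hn : 1 ≤ n) (f : A) :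
    S.ρ (S.Dx n (S.ρ f)) = ((-1 : ℚ))^(n-1) • (S.Dx n f + S.βm n f) := by
  obtain ⟨n, rfl⟩ := Nat.exists_eq_add_of_le' hn
  have hconj : S.ρ.toLinearMap ∘ₗ S.Dx (n + 1) ∘ₗ S.ρ.toLinearMap =
      (-1 : ℚ) ^ n • (S.Dx (n + 1) + S.βmLinear (n + 1)) := by
    refine ((S.isLeibniz_Dx _).conj S.ρ S.ρ S.ρ_invol).ext_of_adjoin_eq_top
      (((S.isLeibniz_Dx _).add (S.isLeibniz_βmLinear _)).smul _) S.adjoin_generators_eq_top ?_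
    rintro _ (⟨k, rfl⟩ | ⟨k, rfl⟩)
    · exact S.ρ_Dx_succ_ρ_x n k
    · exact S.ρ_Dx_succ_ρ_θ n k
  rw [Nat.add_sub_cancel]
  exact LinearMap.congr_fun hconj f
end
end
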